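/- arXiv:2501.01288 — 7 statements merged into one kernel-verified Lean document; each statement's English description precedes it below -/
import Mathlib

section
/- Let n ≥ 5. Define permutations in Sym(2n): β₀ = (1,n+1)(2,n+2) and βᵢ = (i,i+1)(n+i,n+i+1) for 1 ≤ i ≤ n−1. Then the subgroup generated by β₀, β₁, …, β_{n−1} has order 2^{n−1}·n!. -/
/-- `βᵢ` generators of the standard copy of the Coxeter group `Dₙ` inside `Sym(2n)`
(realized as permutations of `ℕ`, moving only points in `{1,…,2n}`). -/
def beta (n i : ℕ) : Equiv.Perm ℕ :=
  if i = 0 then Equiv.swap 1 (n + 1) * Equiv.swap 2 (n + 2)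
  else Equiv.swap i (i + 1) * Equiv.swap (n + i) (n + i + 1)

/-- The standard copy of the Coxeter group `Dₙ` in `Sym(2n)`, generated by `β₀,…,β_{n-1}`. -/
def Dn (n : ℕ) : Subgroup (Equiv.Perm ℕ) :=
  Subgroup.closure {g | ∃ i < n, g = beta n i}

/-!
Identify `{1, …, 2n}` with the signed points `±1, …, ±n`, the points `i` and `n + i` being
`±i`. Every `βᵢ` commutes with the negation `x ↦ -x`, whose centralizer, the hyperoctahedral
group, consists of the products `σ ∘ ε_s` of a permutation `σ` of `{1, …, n}` acting diagonally
and the sign change `ε_s` on a set `s`; it has order `2ⁿ n!`. As a permutation of the `2n` points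
`σ ∘ ε_s` has sign `(-1)^|s|`, so the even ones form a subgroup of index two. The `βᵢ` with
`i ≥ 1` are the adjacent transpositions acting diagonally, and conjugating `β₀ = ε_{1,2}` by the
permutations they generate gives every `ε_{a,b}`, hence every even sign change: the `βᵢ` generate
exactly the even part.
-/

open Equiv Equiv.Perm Finset

lemma Equiv.Perm.exists_apply_eq_and_apply_eq {α : Type*} [DecidableEq α] {a b c d : α}
    (hab : a ≠ b) (hcd : c ≠ d) : ∃ σ : Perm α, σ a = c ∧ σ b = d := by
  refine ⟨swap (swap a c b) d * swap a c, ?_, by simp [Perm.mul_apply]⟩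
  rw [Perm.mul_apply, swap_apply_left, swap_apply_of_ne_of_ne _ hcd]
  intro h
  exact hab (by rw [swap_apply_eq_iff.mp h.symm, swap_apply_right])

lemma Equiv.Perm.mem_of_forall_swap_castSucc_succ_mem {m : ℕ}
    {K : Subgroup (Perm (Fin (m + 1)))} (h : ∀ i : Fin m, swap i.castSucc i.succ ∈ K)
    (σ : Perm (Fin (m + 1))) : σ ∈ K := by
  have hσ : σ ∈ Submonoid.closure (Set.range fun i : Fin m => swap i.castSucc i.succ) := by
    rw [mclosure_swap_castSucc_succ]
    trivial
  exact (Submonoid.closure_le (S := K.toSubmonoid)).mpr (Set.range_subset_iff.mpr h) hσ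

lemma Equiv.Perm.viaEmbedding_swap {α β : Type*} [DecidableEq α] [DecidableEq β] (ι : α ↪ β)
    (a b : α) : (swap a b).viaEmbedding ι = swap (ι a) (ι b) := by
  ext x
  by_cases hx : x ∈ Set.range ι
  · obtain ⟨y, rfl⟩ := hx
    rw [viaEmbedding_apply, ι.injective.swap_apply]
  · rw [viaEmbedding_apply_of_notMem _ _ x hx,
      swap_apply_of_ne_of_ne (fun h => hx ⟨a, h.symm⟩) (fun h => hx ⟨b, h.symm⟩)]

namespace SignedPerm

variable {α : Type*}

/-- `(a, false)` and `(a, true)` stand for the signed points `+a` and `-a`. -/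
def neg (α : Type*) : Perm (α × Bool) := prodCongrRight fun _ => boolNot

def ofPerm : Perm α →* Perm (α × Bool) where
  toFun σ := prodCongrLeft fun _ => σ
  map_one' := rfl
  map_mul' _ _ := rfl

def signedPerms (α : Type*) : Subgroup (Perm (α × Bool)) := Subgroup.centralizer {neg α}

@[simp] lemma neg_apply (p : α × Bool) : neg α p = (p.1, !p.2) := rfl

@[simp] lemma ofPerm_apply (σ : Perm α) (p : α × Bool) : ofPerm σ p = (σ p.1, p.2) := rfl

lemma ofPerm_mem_signedPerms (σ : Perm α) : ofPerm σ ∈ signedPerms α :=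
  Subgroup.mem_centralizer_singleton_iff.mpr (by ext <;> simp)

lemma apply_not_of_mem_signedPerms {g : Perm (α × Bool)} (hg : g ∈ signedPerms α)
    (a : α) (b : Bool) : g (a, !b) = ((g (a, b)).1, !(g (a, b)).2) :=
  DFunLike.congr_fun (Subgroup.mem_centralizer_singleton_iff.mp hg) (a, b)

lemma fst_apply_of_mem_signedPerms {g : Perm (α × Bool)} (hg : g ∈ signedPerms α)
    (a : α) (b : Bool) : (g (a, b)).1 = (g (a, false)).1 := by
  cases b
  · rfl
  · rw [← Bool.not_false, apply_not_of_mem_signedPerms hg]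

variable [DecidableEq α]

def signChange (s : Finset α) : Perm (α × Bool) :=
  prodCongrRight fun a => if a ∈ s then boolNot else 1

def evenSignedPerms (α : Type*) [DecidableEq α] [Fintype α] : Subgroup (Perm (α × Bool)) :=
  Perm.sign.ker ⊓ signedPerms α

@[simp] lemma signChange_apply (s : Finset α) (a : α) (b : Bool) :
    signChange s (a, b) = (a, if a ∈ s then !b else b) := by
  by_cases h : a ∈ s <;> simp [signChange, h]

@[simp] lemma signChange_empty : signChange (∅ : Finset α) = 1 := by
  ext ⟨a, b⟩ <;> simp

lemma signChange_union {s t : Finset α} (h : Disjoint s t) :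
    signChange (s ∪ t) = signChange s * signChange t := by
  ext ⟨a, b⟩
  · simp
  · by_cases hs : a ∈ s <;> by_cases ht : a ∈ t <;> simp_all [Finset.disjoint_left]

lemma signChange_singleton (a : α) : signChange {a} = swap (a, false) (a, true) := by
  ext ⟨c, b⟩ <;> by_cases h : c = a <;> cases b <;> simp [swap_apply_def, h]

lemma signChange_mem_signedPerms (s : Finset α) : signChange s ∈ signedPerms α :=
  Subgroup.mem_centralizer_singleton_iff.mpr (by ext ⟨a, b⟩ <;> by_cases a ∈ s <;> simp_all)

lemma ofPerm_swap {a b : α} (hab : a ≠ b) :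
    ofPerm (swap a b) = swap (a, false) (b, false) * swap (a, true) (b, true) := by
  ext ⟨c, d⟩ <;> by_cases ha : c = a <;> by_cases hb : c = b <;> cases d <;>
    simp_all [swap_apply_def]

lemma ofPerm_mul_signChange_mul_inv (σ : Perm α) (s : Finset α) :
    ofPerm σ * signChange s * (ofPerm σ)⁻¹ = signChange (s.map σ.toEmbedding) := by
  rw [mul_inv_eq_iff_eq_mul]
  ext ⟨a, b⟩ <;> simp [Perm.mul_apply]

lemma ofPerm_mul_signChange_apply_false (σ : Perm α) (s : Finset α) (a : α) :
    (ofPerm σ * signChange s) (a, false) = (σ a, decide (a ∈ s)) := by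
  by_cases h : a ∈ s <;> simp [Perm.mul_apply, h]

lemma ofPerm_mul_signChange_injective :
    Function.Injective fun p : Perm α × Finset α => ofPerm p.1 * signChange p.2 := by
  rintro ⟨σ, s⟩ ⟨τ, t⟩ h
  have h' (a : α) := congrArg (· (a, false)) h
  simp only [ofPerm_mul_signChange_apply_false, Prod.mk.injEq, decide_eq_decide] at h'
  simp only [Prod.mk.injEq]
  exact ⟨Equiv.ext fun a => (h' a).1, Finset.ext fun a => (h' a).2⟩

section Generation

variable {K : Subgroup (Perm (α × Bool))} (hK : ∀ σ, ofPerm σ ∈ K)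
include hK

lemma signChange_pair_mem {a b : α} (hab : a ≠ b) (h : signChange {a, b} ∈ K) {c d : α}
    (hcd : c ≠ d) : signChange {c, d} ∈ K := by
  obtain ⟨σ, rfl, rfl⟩ := exists_apply_eq_and_apply_eq hab hcd
  simpa [ofPerm_mul_signChange_mul_inv] using mul_mem (mul_mem (hK σ) h) (inv_mem (hK σ))

lemma signChange_mem_of_even {a b : α} (hab : a ≠ b) (h : signChange {a, b} ∈ K)
    {s : Finset α} (hs : Even #s) : signChange s ∈ K := by
  obtain ⟨k, hk⟩ := hs
  induction k generalizing s with
  | zero => simp_all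
  | succ k ih =>
    obtain ⟨t, hts, ht⟩ := exists_subset_card_eq (show 2 ≤ #s by omega)
    obtain ⟨c, d, hcd, rfl⟩ := card_eq_two.mp ht
    rw [← union_sdiff_of_subset hts, signChange_union disjoint_sdiff]
    exact mul_mem (signChange_pair_mem hK hab h hcd)
      (ih (by rw [card_sdiff_of_subset hts, hk, ht]; omega))

end Generation

section Finite

variable [Fintype α]

lemma exists_ofPerm_mul_signChange_eq {g : Perm (α × Bool)} (hg : g ∈ signedPerms α) :
    ∃ σ s, ofPerm σ * signChange s = g := by
  have hg' := inv_mem hg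
  let σ : Perm α :=
    { toFun a := (g (a, false)).1
      invFun a := (g⁻¹ (a, false)).1
      left_inv a := by
        dsimp only
        rw [← fst_apply_of_mem_signedPerms hg' _ (g (a, false)).2, Prod.mk.eta, coe_inv,
          symm_apply_apply]
      right_inv a := by
        dsimp only
        rw [← fst_apply_of_mem_signedPerms hg _ (g⁻¹ (a, false)).2, Prod.mk.eta, coe_inv,
          apply_symm_apply] }
  refine ⟨σ, univ.filter fun a => (g (a, false)).2, Equiv.ext fun ⟨a, b⟩ => ?_⟩
  cases b
  · rw [ofPerm_mul_signChange_apply_false]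
    simp [σ]
  · rw [← Bool.not_false, apply_not_of_mem_signedPerms hg]
    cases h : (g (a, false)).2 <;> simp [Perm.mul_apply, σ, h]

lemma card_signedPerms :
    Nat.card (signedPerms α) = 2 ^ Fintype.card α * (Fintype.card α).factorial := by
  have hbij : Function.Bijective fun p : Perm α × Finset α =>
      (⟨ofPerm p.1 * signChange p.2,
        mul_mem (ofPerm_mem_signedPerms p.1) (signChange_mem_signedPerms p.2)⟩ :
        signedPerms α) := by
    refine ⟨fun p q h => ofPerm_mul_signChange_injective (congrArg Subtype.val h), ?_⟩
    rintro ⟨g, hg⟩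
    obtain ⟨σ, s, rfl⟩ := exists_ofPerm_mul_signChange_eq hg
    exact ⟨(σ, s), rfl⟩
  rw [← Nat.card_congr (Equiv.ofBijective _ hbij), Nat.card_prod, Nat.card_perm,
    Nat.card_eq_fintype_card (α := Finset α), Fintype.card_finset, Nat.card_eq_fintype_card,
    mul_comm]

lemma sign_ofPerm (σ : Perm α) : sign (ofPerm σ) = 1 := by
  rw [show ofPerm σ = prodCongrLeft fun _ => σ from rfl, sign_prodCongrLeft, Fintype.prod_bool,
    Int.units_mul_self]

lemma sign_signChange (s : Finset α) : sign (signChange s) = (-1) ^ #s := by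
  have : boolNot = swap false true := by ext b; cases b <;> rfl
  simp [signChange, sign_prodCongrRight, apply_ite, Finset.prod_ite_mem, this]

lemma ofPerm_mem_evenSignedPerms (σ : Perm α) : ofPerm σ ∈ evenSignedPerms α :=
  Subgroup.mem_inf.mpr ⟨sign_ofPerm σ, ofPerm_mem_signedPerms σ⟩

lemma signChange_mem_evenSignedPerms_iff {s : Finset α} :
    signChange s ∈ evenSignedPerms α ↔ Even #s := by
  simp [evenSignedPerms, sign_signChange, signChange_mem_signedPerms,
    neg_one_pow_eq_one_iff_even]

lemma card_evenSignedPerms [Nonempty α] :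
    Nat.card (evenSignedPerms α) = 2 ^ (Fintype.card α - 1) * (Fintype.card α).factorial := by
  have hsign : (signedPerms α).map sign = ⊤ := by
    refine eq_top_iff.mpr fun u _ => ?_
    obtain ⟨a⟩ := ‹Nonempty α›
    rcases Int.units_eq_one_or u with rfl | rfl
    · exact one_mem _
    · exact ⟨signChange {a}, signChange_mem_signedPerms _, by simp [sign_signChange]⟩
  have hindex : (evenSignedPerms α).relIndex (signedPerms α) = 2 := by
    rw [evenSignedPerms, Subgroup.inf_relIndex_right, Subgroup.relIndex_ker, hsign,
      Subgroup.card_top, Nat.card_eq_fintype_card, Fintype.card_units_int]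
  have hcard := Subgroup.relIndex_mul_relIndex ⊥ (evenSignedPerms α) _ bot_le inf_le_right
  rw [Subgroup.relIndex_bot_left, Subgroup.relIndex_bot_left, hindex, card_signedPerms] at hcard
  obtain ⟨k, hk⟩ := Nat.exists_eq_succ_of_ne_zero (Fintype.card_ne_zero (α := α))
  rw [hk, pow_succ] at hcard
  rw [hk, Nat.succ_sub_one]
  linarith

lemma evenSignedPerms_le {K : Subgroup (Perm (α × Bool))} (hK : ∀ σ, ofPerm σ ∈ K) {a b : α}
    (hab : a ≠ b) (h : signChange {a, b} ∈ K) : evenSignedPerms α ≤ K := by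
  intro g hg
  obtain ⟨σ, s, rfl⟩ := exists_ofPerm_mul_signChange_eq (Subgroup.mem_inf.mp hg).2
  have hs : signChange s ∈ evenSignedPerms α := by
    simpa using mul_mem (inv_mem (ofPerm_mem_evenSignedPerms σ)) hg
  exact mul_mem (hK σ) (signChange_mem_of_even hK hab h (signChange_mem_evenSignedPerms_iff.mp hs))

end Finite

end SignedPerm

open SignedPerm

def pointEmbedding (n : ℕ) : Fin n × Bool ↪ ℕ where
  toFun p := cond p.2 n 0 + p.1 + 1
  inj' := by
    rintro ⟨⟨i, hi⟩, b⟩ ⟨⟨j, hj⟩, c⟩ h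
    cases b <;> cases c <;> simp_all <;> omega

@[simp] lemma pointEmbedding_apply (n : ℕ) (i : Fin n) (b : Bool) :
    pointEmbedding n (i, b) = cond b n 0 + i + 1 := rfl

noncomputable def toPermNat (n : ℕ) : Perm (Fin n × Bool) →* Perm ℕ :=
  viaEmbeddingHom (pointEmbedding n)

lemma toPermNat_swap (n : ℕ) (p q : Fin n × Bool) :
    toPermNat n (swap p q) = swap (pointEmbedding n p) (pointEmbedding n q) :=
  viaEmbedding_swap _ p q

lemma beta_zero_eq (m : ℕ) : beta (m + 2) 0 = toPermNat (m + 2) (signChange {0, 1}) := by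
  rw [insert_eq, signChange_union (by simp), signChange_singleton, signChange_singleton, map_mul,
    toPermNat_swap, toPermNat_swap]
  simp [beta]

lemma beta_succ_eq (m : ℕ) (i : Fin (m + 1)) :
    beta (m + 2) (i + 1) = toPermNat (m + 2) (ofPerm (swap i.castSucc i.succ)) := by
  rw [ofPerm_swap Fin.castSucc_lt_succ.ne, map_mul, toPermNat_swap, toPermNat_swap]
  simp [beta, add_assoc]

lemma Dn_eq_map_evenSignedPerms (m : ℕ) :
    Dn (m + 2) = (evenSignedPerms (Fin (m + 2))).map (toPermNat (m + 2)) := by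
  apply le_antisymm
  · refine (Subgroup.closure_le _).mpr ?_
    rintro _ ⟨_ | i, hi, rfl⟩
    · refine ⟨_, signChange_mem_evenSignedPerms_iff.mpr ?_, (beta_zero_eq m).symm⟩
      rw [card_pair (by simp)]
      exact even_two
    · exact ⟨_, ofPerm_mem_evenSignedPerms _, (beta_succ_eq m ⟨i, by omega⟩).symm⟩
  · rw [Subgroup.map_le_iff_le_comap]
    refine evenSignedPerms_le (fun σ => ?_) (zero_ne_one (α := Fin (m + 2))) ?_
    · refine mem_of_forall_swap_castSucc_succ_mem (K := (Dn (m + 2)).comap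
        ((toPermNat (m + 2)).comp ofPerm)) (fun i => ?_) σ
      exact Subgroup.subset_closure ⟨i + 1, by omega, (beta_succ_eq m i).symm⟩
    · exact Subgroup.subset_closure ⟨0, by omega, (beta_zero_eq m).symm⟩

/-- The subgroup of `Sym(2n)` generated by `beta n 0, …, beta n (n-1)` has order
`2^(n-1) * n!` (it is a copy of the Coxeter group of type `Dₙ`). -/
theorem stmt0 (n : ℕ) (hn : 5 ≤ n) :
    Nat.card (Dn n) = 2 ^ (n - 1) * Nat.factorial n := by
  obtain ⟨m, rfl⟩ : ∃ m, n = m + 2 := ⟨n - 2, by omega⟩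
  rw [Dn_eq_map_evenSignedPerms,
    Subgroup.card_map_of_injective (f := toPermNat _) (viaEmbeddingHom_injective _),
    card_evenSignedPerms, Fintype.card_fin]
end

section
/- Let n ≥ 5, let W ≤ Sym(2n) be the group generated by β₀=(1,n+1)(2,n+2) and βᵢ=(i,i+1)(n+i,n+i+1) for 1 ≤ i ≤ n−1 (so W ≅ D_n), and let N be the subgroup of W consisting of elements that are products of an even number of transpositions of the form (i,n+i). If H ≤ W satisfies W = HN and H ∩ N is not contained in the center Z(W), then H = W. -/
open scoped Pointwise

/-- The subgroup `N` of even sign changes: it is generated by (hence consists exactly of)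
products of an even number of transpositions of the form `(i, n+i)`, `1 ≤ i ≤ n`. -/
def Neven (n : ℕ) : Subgroup (Equiv.Perm ℕ) :=
  Subgroup.closure {g | ∃ i ∈ Finset.Icc 1 n, ∃ j ∈ Finset.Icc 1 n,
    g = Equiv.swap i (n + i) * Equiv.swap j (n + j)}

/-- mirror map -/
def mir (n x : ℕ) : ℕ :=
  if 1 ≤ x ∧ x ≤ n then x + n else if n + 1 ≤ x ∧ x ≤ n + n then x - n else x

lemma mir_mir (n x : ℕ) : mir n (mir n x) = x := by
  unfold mir; split_ifs <;> omega

lemma mir_low {n x : ℕ} (h1 : 1 ≤ x) (h2 : x ≤ n) : mir n x = x + n := by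
  unfold mir; split_ifs <;> omega

lemma mir_high {n x : ℕ} (h1 : 1 ≤ x) (h2 : x ≤ n) : mir n (x + n) = x := by
  unfold mir; split_ifs <;> omega

lemma beta_apply (n l x : ℕ) (hl : 1 ≤ l) (hn : 2 ≤ n) :
    beta n l x = if x = l then l + 1 else if x = l + 1 then l
      else if x = n + l then n + l + 1 else if x = n + l + 1 then n + l else x := by
  unfold beta
  rw [if_neg (by omega)]
  simp only [Equiv.Perm.mul_apply, Equiv.swap_apply_def]
  split_ifs <;> omega

lemma swaps_comm {a b c d : ℕ} (h1 : a ≠ c) (h2 : a ≠ d) (h3 : b ≠ c) (h4 : b ≠ d) :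
    Equiv.swap a b * Equiv.swap c d = Equiv.swap c d * Equiv.swap a b := by
  ext x
  simp only [Equiv.Perm.mul_apply, Equiv.swap_apply_def]
  split_ifs <;> omega

lemma invol2 {G : Type*} [Group G] {a b : G} (ha : a * a = 1) (hb : b * b = 1)
    (hc : a * b = b * a) : (a * b) * (a * b) = 1 := by
  rw [mul_assoc, ← mul_assoc b a b, ← hc, mul_assoc a b b, hb, mul_one, ha]

lemma beta_invol (n l : ℕ) (hl : l < n) (hn : 5 ≤ n) : beta n l * beta n l = 1 := by
  rcases Nat.eq_zero_or_pos l with rfl | hl1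
  · unfold beta
    rw [if_pos rfl]
    exact invol2 (Equiv.swap_mul_self _ _) (Equiv.swap_mul_self _ _)
      (swaps_comm (by omega) (by omega) (by omega) (by omega))
  · unfold beta
    rw [if_neg (by omega)]
    exact invol2 (Equiv.swap_mul_self _ _) (Equiv.swap_mul_self _ _)
      (swaps_comm (by omega) (by omega) (by omega) (by omega))

lemma conj_mul' (w a b : Equiv.Perm ℕ) :
    w * (a * b) * w⁻¹ = (w * a * w⁻¹) * (w * b * w⁻¹) := by group

lemma conj_inv' (w a : Equiv.Perm ℕ) :
    w * a⁻¹ * w⁻¹ = (w * a * w⁻¹)⁻¹ := by group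

/-- index action of `beta n l` on `[1,n]` -/
def sig (l j : ℕ) : ℕ := if j = l then l + 1 else if j = l + 1 then l else j

lemma sig_mem {n l j : ℕ} (hl : 1 ≤ l) (hl2 : l < n) (hj : 1 ≤ j) (hj2 : j ≤ n) :
    1 ≤ sig l j ∧ sig l j ≤ n := by
  unfold sig; split_ifs <;> omega

lemma conj_sw (n l j : ℕ) (hn : 5 ≤ n) (hl : 1 ≤ l) (hl2 : l < n) (hj : 1 ≤ j) (hj2 : j ≤ n) :
    beta n l * Equiv.swap j (n + j) * (beta n l)⁻¹
      = Equiv.swap (sig l j) (n + sig l j) := by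
  rw [← Equiv.swap_apply_apply]
  rw [beta_apply n l j hl (by omega), beta_apply n l (n + j) hl (by omega)]
  congr 1 <;> (unfold sig; split_ifs <;> omega)

def Pm (n : ℕ) (g : Equiv.Perm ℕ) : Prop := ∀ x, g x = x ∨ g x = mir n x

lemma Pm_gen {n a b : ℕ} (ha1 : 1 ≤ a) (ha2 : a ≤ n) (hb1 : 1 ≤ b) (hb2 : b ≤ n) :
    Pm n (Equiv.swap a (n + a) * Equiv.swap b (n + b)) := by
  intro x
  simp only [Equiv.Perm.mul_apply, Equiv.swap_apply_def]
  unfold mir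
  split_ifs <;> omega

lemma Pm_mul {n : ℕ} {g h : Equiv.Perm ℕ} (hg : Pm n g) (hh : Pm n h) : Pm n (g * h) := by
  intro x
  rcases hh x with h1 | h1 <;> simp only [Equiv.Perm.mul_apply, h1]
  · exact hg x
  · rcases hg (mir n x) with h2 | h2
    · right; exact h2
    · left; rw [h2, mir_mir]

lemma Pm_N {n : ℕ} {g : Equiv.Perm ℕ} (hg : g ∈ Neven n) : Pm n g := by
  unfold Neven at hg
  have : Pm n g ∧ Pm n g⁻¹ := by
    induction hg using Subgroup.closure_induction with
    | mem x hx =>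
        obtain ⟨a, ha, b, hb, rfl⟩ := hx
        simp only [Finset.mem_Icc] at ha hb
        refine ⟨Pm_gen ha.1 ha.2 hb.1 hb.2, ?_⟩
        rw [mul_inv_rev, Equiv.swap_inv, Equiv.swap_inv]
        exact Pm_gen hb.1 hb.2 ha.1 ha.2
    | one => constructor <;> · intro x; left; simp
    | mul x y hx hy px py =>
        exact ⟨Pm_mul px.1 py.1, by rw [mul_inv_rev]; exact Pm_mul py.2 px.2⟩
    | inv x hx px => exact ⟨px.2, by rw [inv_inv]; exact px.1⟩
  exact this.1

lemma sw_comm {n a b : ℕ} (ha1 : 1 ≤ a) (ha2 : a ≤ n) (hb1 : 1 ≤ b) (hb2 : b ≤ n) :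
    Equiv.swap a (n + a) * Equiv.swap b (n + b)
      = Equiv.swap b (n + b) * Equiv.swap a (n + a) := by
  rcases eq_or_ne a b with rfl | hab
  · rfl
  · exact swaps_comm (by omega) (by omega) (by omega) (by omega)

lemma N_comm {n : ℕ} : ∀ g ∈ Neven n, ∀ h ∈ Neven n, g * h = h * g := by
  intro g hg h hh
  unfold Neven at hg hh
  induction hg, hh using Subgroup.closure_induction₂ with
  | mem x y hx hy =>
      obtain ⟨a, ha, b, hb, rfl⟩ := hx
      obtain ⟨c, hc, d, hd, rfl⟩ := hy
      simp only [Finset.mem_Icc] at ha hb hc hd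
      have C : ∀ u v : ℕ, 1 ≤ u → u ≤ n → 1 ≤ v → v ≤ n →
          Commute (Equiv.swap u (n + u)) (Equiv.swap v (n + v)) :=
        fun u v h1 h2 h3 h4 => sw_comm h1 h2 h3 h4
      exact (((C a c ha.1 ha.2 hc.1 hc.2).mul_left (C b c hb.1 hb.2 hc.1 hc.2)).mul_right
        ((C a d ha.1 ha.2 hd.1 hd.2).mul_left (C b d hb.1 hb.2 hd.1 hd.2))).eq
  | one_left x hx => simp
  | one_right x hx => simp
  | mul_left x y z hx hy hz h1 h2 => exact ((Commute.mul_left h1 h2 : Commute _ _).eq)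
  | mul_right y z x hy hz hx h1 h2 => exact ((Commute.mul_right h1 h2 : Commute _ _).eq)
  | inv_left x y hx hy h1 => exact ((Commute.inv_left h1 : Commute _ _).eq)
  | inv_right x y hx hy h1 => exact ((Commute.inv_right h1 : Commute _ _).eq)

lemma N_sq {n : ℕ} : ∀ g ∈ Neven n, g * g = 1 := by
  intro g hg
  have hg' := hg
  unfold Neven at hg'
  induction hg' using Subgroup.closure_induction with
  | mem x hx =>
      obtain ⟨a, ha, b, hb, rfl⟩ := hx
      simp only [Finset.mem_Icc] at ha hb
      exact invol2 (Equiv.swap_mul_self _ _) (Equiv.swap_mul_self _ _)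
        (sw_comm ha.1 ha.2 hb.1 hb.2)
  | one => simp
  | mul x y hx hy px py =>
      exact invol2 (px hx) (py hy) (N_comm x hx y hy)
  | inv x hx px =>
      have h1 : x⁻¹ = x := inv_eq_of_mul_eq_one_right (px hx)
      rw [h1]; exact px hx

lemma betaN (n : ℕ) (hn : 5 ≤ n) : beta n 0 ∈ Neven n := by
  apply Subgroup.subset_closure
  refine ⟨1, by simp [Finset.mem_Icc]; omega, 2, by simp [Finset.mem_Icc]; omega, ?_⟩
  unfold beta; rw [if_pos rfl]

lemma N_conj {n : ℕ} (hn : 5 ≤ n) : ∀ w ∈ Dn n, ∀ g ∈ Neven n, w * g * w⁻¹ ∈ Neven n := by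
  have key : ∀ w ∈ Dn n, (∀ g ∈ Neven n, w * g * w⁻¹ ∈ Neven n) ∧
      (∀ g ∈ Neven n, w⁻¹ * g * w ∈ Neven n) := by
    intro w hw
    unfold Dn at hw
    induction hw using Subgroup.closure_induction with
    | mem x hx =>
        obtain ⟨i, hi, rfl⟩ := hx
        rcases Nat.eq_zero_or_pos i with rfl | hi1
        · have hbN := betaN n hn
          exact ⟨fun g hg => mul_mem (mul_mem hbN hg) (inv_mem hbN),
                 fun g hg => mul_mem (mul_mem (inv_mem hbN) hg) hbN⟩
        · have hinv : (beta n i)⁻¹ = beta n i :=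
            inv_eq_of_mul_eq_one_right (beta_invol n i hi hn)
          have main : ∀ g ∈ Neven n, beta n i * g * (beta n i)⁻¹ ∈ Neven n := by
            intro g hg
            unfold Neven at hg
            induction hg using Subgroup.closure_induction with
            | mem y hy =>
                obtain ⟨a, ha, b, hb, rfl⟩ := hy
                simp only [Finset.mem_Icc] at ha hb
                rw [conj_mul', conj_sw n i a hn hi1 hi ha.1 ha.2,
                  conj_sw n i b hn hi1 hi hb.1 hb.2]
                apply Subgroup.subset_closure
                exact ⟨sig i a, by simp only [Finset.mem_Icc]; exact sig_mem hi1 hi ha.1 ha.2,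
                  sig i b, by simp only [Finset.mem_Icc]; exact sig_mem hi1 hi hb.1 hb.2, rfl⟩
            | one => simpa using one_mem _
            | mul a b ha hb pa pb => rw [conj_mul']; exact mul_mem pa pb
            | inv a ha pa => rw [conj_inv']; exact inv_mem pa
          refine ⟨main, fun g hg => ?_⟩
          rw [show (beta n i)⁻¹ * g * beta n i = beta n i * g * (beta n i)⁻¹ from by
            rw [hinv]]
          exact main g hg
    | one => constructor <;> (intro g hg; simpa using hg)
    | mul x y hx hy px py =>
        constructor
        · intro g hg
          have h1 : (x * y) * g * (x * y)⁻¹ = x * (y * g * y⁻¹) * x⁻¹ := by group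
          rw [h1]; exact px.1 _ (py.1 g hg)
        · intro g hg
          have h1 : (x * y)⁻¹ * g * (x * y) = y⁻¹ * (x⁻¹ * g * x) * y := by group
          rw [h1]; exact py.2 _ (px.2 g hg)
    | inv x hx px =>
        exact ⟨fun g hg => px.2 g hg, fun g hg => by rw [inv_inv]; exact px.1 g hg⟩
  exact fun w hw g hg => (key w hw).1 g hg

def swp (n j : ℕ) : Equiv.Perm ℕ := Equiv.swap j (n + j)

lemma swp_sq (n j : ℕ) : swp n j * swp n j = 1 := Equiv.swap_mul_self _ _

lemma swp_inv (n j : ℕ) : (swp n j)⁻¹ = swp n j := Equiv.swap_inv _ _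

lemma betaDn {n i : ℕ} (hi : i < n) : beta n i ∈ Dn n :=
  Subgroup.subset_closure ⟨i, hi, rfl⟩

lemma sig_val {l j v : ℕ} (h : (j = l ∧ v = l + 1) ∨ (j = l + 1 ∧ v = l)
    ∨ (j ≠ l ∧ j ≠ l + 1 ∧ v = j)) : sig l j = v := by
  unfold sig; split_ifs <;> omega

lemma conj_swp_mem {n : ℕ} (hn : 5 ≤ n) (M : Subgroup (Equiv.Perm ℕ))
    (hconj : ∀ w ∈ Dn n, ∀ m ∈ M, w * m * w⁻¹ ∈ M)
    {l j : ℕ} (hl : 1 ≤ l) (hl2 : l < n) (hj : 1 ≤ j) (hj2 : j ≤ n)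
    (h : swp n j ∈ M) : swp n (sig l j) ∈ M := by
  have h2 := hconj (beta n l) (betaDn hl2) _ h
  rwa [show beta n l * swp n j * (beta n l)⁻¹ = swp n (sig l j) from
    conj_sw n l j hn hl hl2 hj hj2] at h2

lemma conj_swp2_mem {n : ℕ} (hn : 5 ≤ n) (M : Subgroup (Equiv.Perm ℕ))
    (hconj : ∀ w ∈ Dn n, ∀ m ∈ M, w * m * w⁻¹ ∈ M)
    {l j k : ℕ} (hl : 1 ≤ l) (hl2 : l < n) (hj : 1 ≤ j) (hj2 : j ≤ n)
    (hk : 1 ≤ k) (hk2 : k ≤ n)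
    (h : swp n j * swp n k ∈ M) : swp n (sig l j) * swp n (sig l k) ∈ M := by
  have h2 := hconj (beta n l) (betaDn hl2) _ h
  rwa [conj_mul', show beta n l * swp n j * (beta n l)⁻¹ = swp n (sig l j) from
    conj_sw n l j hn hl hl2 hj hj2, show beta n l * swp n k * (beta n l)⁻¹ = swp n (sig l k) from
    conj_sw n l k hn hl hl2 hk hk2] at h2

lemma N_le_of_swp {n : ℕ} (hn : 5 ≤ n) (M : Subgroup (Equiv.Perm ℕ))
    (hconj : ∀ w ∈ Dn n, ∀ m ∈ M, w * m * w⁻¹ ∈ M)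
    (hout : (∃ j, 1 ≤ j ∧ j ≤ n ∧ swp n j ∈ M) ∨
      (∃ j, 1 ≤ j ∧ j + 1 ≤ n ∧ swp n j * swp n (j + 1) ∈ M)) :
    Neven n ≤ M := by
  have step1 : ∀ j, 1 ≤ j → j < n → (swp n j ∈ M ↔ swp n (j + 1) ∈ M) := by
    intro j h1 h2
    constructor
    · intro h
      have h3 := conj_swp_mem hn M hconj h1 h2 h1 (by omega) h
      rwa [show sig j j = j + 1 from sig_val (by omega)] at h3
    · intro h
      have h3 := conj_swp_mem hn M hconj h1 h2 (by omega : 1 ≤ j + 1) (by omega) h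
      rwa [show sig j (j + 1) = j from sig_val (by omega)] at h3
  have singleAll : (∃ j, 1 ≤ j ∧ j ≤ n ∧ swp n j ∈ M) →
      ∀ j, 1 ≤ j → j ≤ n → swp n j ∈ M := by
    rintro ⟨j0, h01, h02, h0⟩
    have toOne : ∀ j, 1 ≤ j → j ≤ n → (swp n j ∈ M ↔ swp n 1 ∈ M) := by
      intro j
      induction j with
      | zero => intro h; omega
      | succ j ih =>
        intro h1 h2
        rcases Nat.eq_zero_or_pos j with rfl | hj
        · exact Iff.rfl
        · exact (step1 j hj (by omega)).symm.trans (ih hj (by omega))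
    intro j h1 h2
    exact (toOne j h1 h2).2 ((toOne j0 h01 h02).1 h0)
  have step2 : ∀ j, 1 ≤ j → j + 2 ≤ n →
      ((swp n j * swp n (j + 1) ∈ M) ↔ (swp n (j + 1) * swp n (j + 1 + 1) ∈ M)) := by
    intro j h1 h2
    constructor
    · intro h
      have h3 := conj_swp2_mem hn M hconj (show 1 ≤ j + 1 by omega) (show j + 1 < n by omega)
        h1 (by omega) (show 1 ≤ j + 1 by omega) (by omega) h
      rw [show sig (j + 1) j = j from sig_val (by omega),
        show sig (j + 1) (j + 1) = j + 2 from sig_val (by omega)] at h3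
      have h4 := conj_swp2_mem hn M hconj h1 (show j < n by omega) h1 (by omega)
        (show 1 ≤ j + 2 by omega) (by omega) h3
      rwa [show sig j j = j + 1 from sig_val (by omega),
        show sig j (j + 2) = j + 1 + 1 from sig_val (by omega)] at h4
    · intro h
      have h3 := conj_swp2_mem hn M hconj h1 (show j < n by omega) (show 1 ≤ j + 1 by omega)
        (by omega) (show 1 ≤ j + 1 + 1 by omega) (by omega) h
      rw [show sig j (j + 1) = j from sig_val (by omega),
        show sig j (j + 1 + 1) = j + 2 from sig_val (by omega)] at h3
      have h4 := conj_swp2_mem hn M hconj (show 1 ≤ j + 1 by omega) (show j + 1 < n by omega)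
        h1 (by omega) (show 1 ≤ j + 2 by omega) (by omega) h3
      rwa [show sig (j + 1) j = j from sig_val (by omega),
        show sig (j + 1) (j + 2) = j + 1 from sig_val (by omega)] at h4
  have pairAll : (∃ j, 1 ≤ j ∧ j + 1 ≤ n ∧ swp n j * swp n (j + 1) ∈ M) →
      ∀ j k, 1 ≤ j → j < k → k ≤ n → swp n j * swp n k ∈ M := by
    rintro ⟨j0, h01, h02, h0⟩
    have toOne : ∀ j, 1 ≤ j → j + 1 ≤ n →
        (swp n j * swp n (j + 1) ∈ M ↔ swp n 1 * swp n 2 ∈ M) := by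
      intro j
      induction j with
      | zero => intro h; omega
      | succ j ih =>
        intro h1 h2
        rcases Nat.eq_zero_or_pos j with rfl | hj
        · exact Iff.rfl
        · exact (step2 j hj (by omega)).symm.trans (ih hj (by omega))
    have adj : ∀ j, 1 ≤ j → j + 1 ≤ n → swp n j * swp n (j + 1) ∈ M :=
      fun j h1 h2 => (toOne j h1 h2).2 ((toOne j0 h01 h02).1 h0)
    intro j k
    induction k with
    | zero => intro _ h _; omega
    | succ k ih =>
      intro h1 h2 h3
      rcases eq_or_lt_of_le (Nat.lt_succ_iff.1 h2) with rfl | hjk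
      · exact adj j h1 (by omega)
      · have h4 := ih h1 hjk (by omega)
        have h5 := adj k (by omega) (by omega)
        have h6 := mul_mem h4 h5
        rwa [show (swp n j * swp n k) * (swp n k * swp n (k + 1)) = swp n j * swp n (k + 1) from by
          rw [mul_assoc, ← mul_assoc (swp n k) (swp n k), swp_sq n k, one_mul]] at h6
  have key : ∀ j k, 1 ≤ j → j ≤ n → 1 ≤ k → k ≤ n → swp n j * swp n k ∈ M := by
    intro j k h1 h2 h3 h4
    rcases hout with hs | hp
    · exact mul_mem (singleAll hs j h1 h2) (singleAll hs k h3 h4)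
    · rcases lt_trichotomy j k with h | h | h
      · exact pairAll hp j k h1 h h4
      · subst h; rw [swp_sq n j]; exact one_mem M
      · have h5 := inv_mem (pairAll hp k j h3 h h2)
        rwa [mul_inv_rev, swp_inv, swp_inv] at h5
  have hsub : {g : Equiv.Perm ℕ | ∃ i ∈ Finset.Icc 1 n, ∃ j ∈ Finset.Icc 1 n,
      g = Equiv.swap i (n + i) * Equiv.swap j (n + j)} ⊆ ↑M := by
    rintro x ⟨a, ha, b, hb, rfl⟩
    simp only [Finset.mem_Icc] at ha hb
    exact key a b ha.1 ha.2 hb.1 hb.2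
  exact (Subgroup.closure_le M).2 hsub

/-- If `H ≤ W ≅ Dₙ` satisfies `W = H * N` and `H ⊓ N` is not contained in the
center of `W`, then `H = W`. -/
theorem stmt2 (n : ℕ) (hn : 5 ≤ n) (H : Subgroup (Equiv.Perm ℕ))
    (hHW : H ≤ Dn n)
    (hprod : (H : Set (Equiv.Perm ℕ)) * (Neven n : Set (Equiv.Perm ℕ)) = (Dn n : Set (Equiv.Perm ℕ)))
    (hZ : ¬ H ⊓ Neven n ≤ Subgroup.centralizer (Dn n : Set (Equiv.Perm ℕ))) :
    H = Dn n := by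
  have hconjM : ∀ w ∈ Dn n, ∀ m ∈ H ⊓ Neven n, w * m * w⁻¹ ∈ H ⊓ Neven n := by
    intro w hw m hm
    rw [Subgroup.mem_inf] at hm
    have hw' : w ∈ (H : Set (Equiv.Perm ℕ)) * (Neven n : Set (Equiv.Perm ℕ)) := by
      rw [hprod]; exact hw
    rw [Set.mem_mul] at hw'
    obtain ⟨h, hh, g, hg, rfl⟩ := hw'
    have e : (h * g) * m * (h * g)⁻¹ = h * (g * m * g⁻¹) * h⁻¹ := by group
    have e2 : g * m * g⁻¹ = m := by rw [N_comm g hg m hm.2, mul_inv_cancel_right]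
    rw [e, e2, Subgroup.mem_inf]
    exact ⟨mul_mem (mul_mem hh hm.1) (inv_mem hh), N_conj hn h (hHW hh) m hm.2⟩
  rw [SetLike.le_def] at hZ
  push_neg at hZ
  obtain ⟨m, hmM, hmc⟩ := hZ
  have hmN : m ∈ Neven n := (Subgroup.mem_inf.1 hmM).2
  have hbad : ∃ i, 1 ≤ i ∧ i < n ∧ beta n i * m ≠ m * beta n i := by
    by_contra hcon
    push_neg at hcon
    apply hmc
    rw [Subgroup.mem_centralizer_iff]
    intro w hw
    have hcen : Dn n ≤ Subgroup.centralizer {m} := by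
      apply (Subgroup.closure_le _).2
      rintro x ⟨i, hi, rfl⟩
      rw [SetLike.mem_coe, Subgroup.mem_centralizer_iff]
      intro y hy
      rw [Set.mem_singleton_iff] at hy; rw [hy]
      rcases Nat.eq_zero_or_pos i with rfl | hi1
      · exact N_comm m hmN _ (betaN n hn)
      · exact (hcon i hi1 hi).symm
    exact (Subgroup.mem_centralizer_iff.1 (hcen hw) m rfl).symm
  obtain ⟨i, hi1, hi, hbadi⟩ := hbad
  set β := beta n i with hβ
  have hβDn : β ∈ Dn n := betaDn hi
  have hβinv : β⁻¹ = β := inv_eq_of_mul_eq_one_right (beta_invol n i hi hn)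
  have hminv : m⁻¹ = m := inv_eq_of_mul_eq_one_right (N_sq m hmN)
  set c := m * (β * m * β⁻¹) with hc
  have hcM : c ∈ H ⊓ Neven n := mul_mem hmM (hconjM β hβDn m hmM)
  have hcN : c ∈ Neven n := (Subgroup.mem_inf.1 hcM).2
  have hc1 : c ≠ 1 := by
    intro h0
    have e : β * m * β⁻¹ = m := by
      have e1 := eq_inv_of_mul_eq_one_right h0
      rw [hminv] at e1; exact e1
    exact hbadi (mul_inv_eq_iff_eq_mul.1 e)
  have hPc := Pm_N hcN
  have hPm := Pm_N hmN
  have hβval : ∀ x, β x = if x = i then i + 1 else if x = i + 1 then i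
      else if x = n + i then n + i + 1 else if x = n + i + 1 then n + i else x :=
    fun x => beta_apply n i x hi1 (by omega)
  have hβfix : ∀ x, x ≠ i → x ≠ i + 1 → x ≠ n + i → x ≠ n + i + 1 → β x = x := by
    intro x h1 h2 h3 h4; rw [hβval x]; split_ifs <;> omega
  have hmirfix : ∀ x, x ≠ i → x ≠ i + 1 → x ≠ n + i → x ≠ n + i + 1 →
      (mir n x ≠ i ∧ mir n x ≠ i + 1 ∧ mir n x ≠ n + i ∧ mir n x ≠ n + i + 1) := by
    intro x h1 h2 h3 h4; unfold mir; split_ifs <;> omega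
  have hcapp : ∀ x, c x = m (β (m (β x))) := by
    intro x
    rw [hc]
    simp only [Equiv.Perm.mul_apply, hβinv]
  have hfix : ∀ x, x ≠ i → x ≠ i + 1 → x ≠ n + i → x ≠ n + i + 1 → c x = x := by
    intro x h1 h2 h3 h4
    obtain ⟨m1, m2, m3, m4⟩ := hmirfix x h1 h2 h3 h4
    have hcx := hcapp x
    rw [hβfix x h1 h2 h3 h4] at hcx
    rcases hPm x with e | e
    · rw [e, hβfix x h1 h2 h3 h4, e] at hcx; exact hcx
    · rw [e, hβfix _ m1 m2 m3 m4] at hcx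
      rcases hPm (mir n x) with f | f
      · have hx : x = mir n x := m.injective (by rw [e, f])
        rw [f, ← hx] at hcx; exact hcx
      · rw [f, mir_mir] at hcx; exact hcx
  have hmiri : mir n i = n + i := by unfold mir; split_ifs <;> omega
  have hmiri1 : mir n (i + 1) = n + i + 1 := by unfold mir; split_ifs <;> omega
  have hmirni : mir n (n + i) = i := by unfold mir; split_ifs <;> omega
  have hmirni1 : mir n (n + i + 1) = i + 1 := by unfold mir; split_ifs <;> omega
  have hci : c i = i ∨ c i = n + i := by
    rcases hPc i with e | e
    · exact Or.inl e
    · exact Or.inr (by rw [e, hmiri])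
  have hci1 : c (i + 1) = i + 1 ∨ c (i + 1) = n + i + 1 := by
    rcases hPc (i + 1) with e | e
    · exact Or.inl e
    · exact Or.inr (by rw [e, hmiri1])
  have hout : (∃ j, 1 ≤ j ∧ j ≤ n ∧ swp n j ∈ H ⊓ Neven n) ∨
      (∃ j, 1 ≤ j ∧ j + 1 ≤ n ∧ swp n j * swp n (j + 1) ∈ H ⊓ Neven n) := by
    rcases hci with ci | ci <;> rcases hci1 with ci1 | ci1
    · -- c = 1, contradiction
      exfalso
      have cni : c (n + i) = n + i := by
        rcases hPc (n + i) with e | e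
        · exact e
        · rw [hmirni] at e
          exact absurd (c.injective (show c (n + i) = c i by rw [e, ci])) (by omega)
      have cni1 : c (n + i + 1) = n + i + 1 := by
        rcases hPc (n + i + 1) with e | e
        · exact e
        · rw [hmirni1] at e
          exact absurd (c.injective (show c (n + i + 1) = c (i + 1) by rw [e, ci1])) (by omega)
      apply hc1
      ext x
      simp only [Equiv.Perm.one_apply]
      by_cases h1 : x = i
      · rw [h1, ci]
      by_cases h2 : x = i + 1
      · rw [h2, ci1]
      by_cases h3 : x = n + i
      · rw [h3, cni]
      by_cases h4 : x = n + i + 1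
      · rw [h4, cni1]
      exact hfix x h1 h2 h3 h4
    · -- c = swp n (i+1)
      have cni : c (n + i) = n + i := by
        rcases hPc (n + i) with e | e
        · exact e
        · rw [hmirni] at e
          exact absurd (c.injective (show c (n + i) = c i by rw [e, ci])) (by omega)
      have cni1 : c (n + i + 1) = i + 1 := by
        rcases hPc (n + i + 1) with e | e
        · exact absurd (c.injective (show c (n + i + 1) = c (i + 1) by rw [e, ci1])) (by omega)
        · rw [hmirni1] at e; exact e
      left
      refine ⟨i + 1, by omega, by omega, ?_⟩
      have hceq : c = swp n (i + 1) := by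
        ext x
        by_cases h1 : x = i
        · subst h1; rw [ci]; simp only [swp, Equiv.swap_apply_def]; split_ifs <;> omega
        by_cases h2 : x = i + 1
        · subst h2; rw [ci1]; simp only [swp, Equiv.swap_apply_def]; split_ifs <;> omega
        by_cases h3 : x = n + i
        · subst h3; rw [cni]; simp only [swp, Equiv.swap_apply_def]; split_ifs <;> omega
        by_cases h4 : x = n + i + 1
        · subst h4; rw [cni1]; simp only [swp, Equiv.swap_apply_def]; split_ifs <;> omega
        · rw [hfix x h1 h2 h3 h4]; simp only [swp, Equiv.swap_apply_def]
          split_ifs <;> omega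
      rw [← hceq]; exact hcM
    · -- c = swp n i
      have cni : c (n + i) = i := by
        rcases hPc (n + i) with e | e
        · exact absurd (c.injective (show c (n + i) = c i by rw [e, ci])) (by omega)
        · rw [hmirni] at e; exact e
      have cni1 : c (n + i + 1) = n + i + 1 := by
        rcases hPc (n + i + 1) with e | e
        · exact e
        · rw [hmirni1] at e
          exact absurd (c.injective (show c (n + i + 1) = c (i + 1) by rw [e, ci1])) (by omega)
      left
      refine ⟨i, hi1, by omega, ?_⟩
      have hceq : c = swp n i := by
        ext x
        by_cases h1 : x = i
        · subst h1; rw [ci]; simp only [swp, Equiv.swap_apply_def]; split_ifs <;> omega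
        by_cases h2 : x = i + 1
        · subst h2; rw [ci1]; simp only [swp, Equiv.swap_apply_def]; split_ifs <;> omega
        by_cases h3 : x = n + i
        · subst h3; rw [cni]; simp only [swp, Equiv.swap_apply_def]; split_ifs <;> omega
        by_cases h4 : x = n + i + 1
        · subst h4; rw [cni1]; simp only [swp, Equiv.swap_apply_def]; split_ifs <;> omega
        · rw [hfix x h1 h2 h3 h4]; simp only [swp, Equiv.swap_apply_def]
          split_ifs <;> omega
      rw [← hceq]; exact hcM
    · -- c = swp n i * swp n (i+1)
      have cni : c (n + i) = i := by
        rcases hPc (n + i) with e | e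
        · exact absurd (c.injective (show c (n + i) = c i by rw [e, ci])) (by omega)
        · rw [hmirni] at e; exact e
      have cni1 : c (n + i + 1) = i + 1 := by
        rcases hPc (n + i + 1) with e | e
        · exact absurd (c.injective (show c (n + i + 1) = c (i + 1) by rw [e, ci1])) (by omega)
        · rw [hmirni1] at e; exact e
      right
      refine ⟨i, hi1, by omega, ?_⟩
      have hceq : c = swp n i * swp n (i + 1) := by
        ext x
        by_cases h1 : x = i
        · subst h1; rw [ci]
          simp only [swp, Equiv.Perm.mul_apply, Equiv.swap_apply_def]
          split_ifs <;> omega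
        by_cases h2 : x = i + 1
        · subst h2; rw [ci1]
          simp only [swp, Equiv.Perm.mul_apply, Equiv.swap_apply_def]
          split_ifs <;> omega
        by_cases h3 : x = n + i
        · subst h3; rw [cni]
          simp only [swp, Equiv.Perm.mul_apply, Equiv.swap_apply_def]
          split_ifs <;> omega
        by_cases h4 : x = n + i + 1
        · subst h4; rw [cni1]
          simp only [swp, Equiv.Perm.mul_apply, Equiv.swap_apply_def]
          split_ifs <;> omega
        · rw [hfix x h1 h2 h3 h4]
          simp only [swp, Equiv.Perm.mul_apply, Equiv.swap_apply_def]
          split_ifs <;> omega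
      rw [← hceq]; exact hcM
  have hNle := N_le_of_swp hn _ hconjM hout
  apply le_antisymm hHW
  intro x hx
  have hx' : x ∈ (H : Set (Equiv.Perm ℕ)) * (Neven n : Set (Equiv.Perm ℕ)) := by
    rw [hprod]; exact hx
  rw [Set.mem_mul] at hx'
  obtain ⟨a, ha, b, hb, rfl⟩ := hx'
  exact mul_mem ha ((Subgroup.mem_inf.1 (hNle hb)).1)
end

section
/- Let n ≥ 5 and define in Sym(2n): t₁ = ∏_{j=2}^{n} (j, n+j) and tᵢ = (i−1,i)(n+i−1,n+i) for 2 ≤ i ≤ n. Then each tᵢ is an involution, and the order of tᵢtⱼ equals 1 if i=j, 2 if |i−j| ≥ 2, 3 if |i−j|=1 and {i,j} ≠ {1,2}, and 4 if {i,j} = {1,2}. -/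
/-- `t₁ = ∏_{j=2}^{n}(j, n+j)` and `tᵢ = (i-1, i)(n+i-1, n+i)` for `2 ≤ i ≤ n`, in `Sym(2n)`. -/
def t (n i : ℕ) : Equiv.Perm ℕ :=
  if i = 1 then ((List.range (n - 1)).map fun j => Equiv.swap (j + 2) (n + (j + 2))).prod
  else Equiv.swap (i - 1) i * Equiv.swap (n + i - 1) (n + i)

lemma prodRange_apply (n m : ℕ) (hm : m + 1 ≤ n) (x : ℕ) :
    (((List.range m).map fun j => Equiv.swap (j + 2) (n + (j + 2))).prod x) =
      if 2 ≤ x ∧ x ≤ m + 1 then n + x else if n + 2 ≤ x ∧ x ≤ n + m + 1 then x - n else x := by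
  induction m generalizing x with
  | zero =>
      simp only [List.range_zero, List.map_nil, List.prod_nil, Equiv.Perm.one_apply]
      split_ifs <;> omega
  | succ m ih =>
      rw [List.range_succ, List.map_append, List.prod_append]
      simp only [List.map_cons, List.map_nil, List.prod_cons, List.prod_nil, mul_one]
      rw [Equiv.Perm.mul_apply, ih (by omega), Equiv.swap_apply_def]
      split_ifs <;> omega

lemma t1_apply (n : ℕ) (hn : 1 ≤ n) (x : ℕ) :
    t n 1 x = if 2 ≤ x ∧ x ≤ n then n + x
      else if n + 2 ≤ x ∧ x ≤ 2 * n then x - n else x := by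
  unfold t
  rw [if_pos rfl, prodRange_apply n (n - 1) (by omega)]
  split_ifs <;> omega

lemma ti_apply (n i : ℕ) (hn : 2 ≤ n) (hi : 2 ≤ i) (x : ℕ) :
    t n i x = if x = i - 1 then i else if x = i then i - 1
      else if x = n + i - 1 then n + i else if x = n + i then n + i - 1 else x := by
  unfold t
  rw [if_neg (by omega), Equiv.Perm.mul_apply, Equiv.swap_apply_def, Equiv.swap_apply_def]
  split_ifs <;> omega

lemma ne_one_of (g : Equiv.Perm ℕ) (x : ℕ) (h : g x ≠ x) : g ≠ 1 :=
  fun e => h (by rw [e]; rfl)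

lemma orderOf_mul_comm' {G : Type*} [Group G] (a b : G) : orderOf (a * b) = orderOf (b * a) :=
  (SemiconjBy.orderOf_eq a (show a * (b * a) = (a * b) * a from (mul_assoc a b a).symm)).symm

lemma t1_sq (n : ℕ) (hn : 1 ≤ n) : t n 1 * t n 1 = 1 := by
  ext x
  simp only [Equiv.Perm.mul_apply, t1_apply n hn, Equiv.Perm.one_apply]
  split_ifs <;> omega

lemma ti_sq (n i : ℕ) (hn : 2 ≤ n) (hi : 2 ≤ i) : t n i * t n i = 1 := by
  ext x
  simp only [Equiv.Perm.mul_apply, ti_apply n i hn hi, Equiv.Perm.one_apply]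
  split_ifs <;> omega

lemma swap_val (a b x y : ℕ)
    (h : (x = a ∧ y = b) ∨ (x = b ∧ y = a) ∨ (x ≠ a ∧ x ≠ b ∧ y = x)) :
    Equiv.swap a b x = y := by
  rw [Equiv.swap_apply_def]
  split_ifs <;> omega

lemma swap_commute (a b c d : ℕ) (h1 : a ≠ c) (h2 : a ≠ d) (h3 : b ≠ c) (h4 : b ≠ d) :
    Commute (Equiv.swap a b) (Equiv.swap c d) := by
  apply Equiv.Perm.Disjoint.commute
  intro x
  rw [Equiv.swap_apply_def, Equiv.swap_apply_def]
  split_ifs <;> omega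

lemma cube_swaps (x y z : ℕ) (hxy : x ≠ y) (hyz : y ≠ z) (hxz : x ≠ z) :
    (Equiv.swap x y * Equiv.swap y z) ^ 3 = 1 := by
  ext w
  simp only [pow_succ, pow_zero, one_mul, Equiv.Perm.mul_apply, Equiv.Perm.one_apply]
  by_cases h1 : w = x
  · rw [h1]
    rw [swap_val y z x x (by omega), swap_val x y x y (by omega), swap_val y z y z (by omega),
      swap_val x y z z (by omega), swap_val y z z y (by omega), swap_val x y y x (by omega)]
  by_cases h2 : w = y
  · rw [h2]
    rw [swap_val y z y z (by omega), swap_val x y z z (by omega), swap_val y z z y (by omega),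
      swap_val x y y x (by omega), swap_val y z x x (by omega), swap_val x y x y (by omega)]
  by_cases h3 : w = z
  · rw [h3]
    rw [swap_val y z z y (by omega), swap_val x y y x (by omega), swap_val y z x x (by omega),
      swap_val x y x y (by omega), swap_val y z y z (by omega), swap_val x y z z (by omega)]
  · rw [swap_val y z w w (by omega), swap_val x y w w (by omega), swap_val y z w w (by omega),
      swap_val x y w w (by omega), swap_val y z w w (by omega), swap_val x y w w (by omega)]

lemma disj_far (n i j : ℕ) (hn : 2 ≤ n) (hi : 2 ≤ i) (hij : i + 2 ≤ j) (hj : j ≤ n) :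
    Equiv.Perm.Disjoint (t n i) (t n j) := by
  intro x
  rw [ti_apply n i hn hi, ti_apply n j hn (by omega)]
  split_ifs <;> omega

lemma t1_inv (n : ℕ) (hn : 1 ≤ n) : (t n 1)⁻¹ = t n 1 :=
  inv_eq_of_mul_eq_one_right (t1_sq n hn)

lemma t_decomp (n i : ℕ) (hi : 2 ≤ i) :
    t n i = Equiv.swap (i - 1) i * Equiv.swap (n + i - 1) (n + i) := by
  unfold t; rw [if_neg (by omega)]

lemma conj_t1 (n j : ℕ) (hn : 2 ≤ n) (hj2 : 2 ≤ j) (hj : j ≤ n) :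
    t n 1 * t n j * (t n 1)⁻¹ =
      Equiv.swap (t n 1 (j - 1)) (t n 1 j) * Equiv.swap (t n 1 (n + j - 1)) (t n 1 (n + j)) := by
  rw [t_decomp n j hj2]
  calc t n 1 * (Equiv.swap (j - 1) j * Equiv.swap (n + j - 1) (n + j)) * (t n 1)⁻¹
      = (t n 1 * Equiv.swap (j - 1) j * (t n 1)⁻¹) *
        (t n 1 * Equiv.swap (n + j - 1) (n + j) * (t n 1)⁻¹) := by group
    _ = _ := by rw [← Equiv.swap_apply_apply, ← Equiv.swap_apply_apply]

lemma t1_val (n x y : ℕ) (hn : 1 ≤ n)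
    (h : (2 ≤ x ∧ x ≤ n ∧ y = n + x) ∨ (n + 2 ≤ x ∧ x ≤ 2 * n ∧ y = x - n) ∨
      ((x < 2 ∨ (n < x ∧ x < n + 2) ∨ 2 * n < x) ∧ y = x)) :
    t n 1 x = y := by
  rw [t1_apply n hn]
  split_ifs <;> omega

lemma comm_t1 (n j : ℕ) (hn : 2 ≤ n) (hj3 : 3 ≤ j) (hj : j ≤ n) :
    t n 1 * t n j = t n j * t n 1 := by
  have key : t n 1 * t n j * (t n 1)⁻¹ = t n j := by
    rw [conj_t1 n j hn (by omega) hj,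
      t1_val n (j - 1) (n + j - 1) (by omega) (by omega),
      t1_val n j (n + j) (by omega) (by omega),
      t1_val n (n + j - 1) (j - 1) (by omega) (by omega),
      t1_val n (n + j) j (by omega) (by omega),
      t_decomp n j (by omega)]
    exact (swap_commute (j - 1) j (n + j - 1) (n + j) (by omega) (by omega) (by omega)
      (by omega)).eq.symm
  exact mul_inv_eq_iff_eq_mul.mp key

lemma sq_of_comm {G : Type*} [Group G] (a b : G) (h : a * b = b * a)
    (ha : a * a = 1) (hb : b * b = 1) : (a * b) * (a * b) = 1 := by
  calc (a * b) * (a * b) = a * ((b * a) * b) := by group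
    _ = a * ((a * b) * b) := by rw [h]
    _ = (a * a) * (b * b) := by group
    _ = 1 := by rw [ha, hb, one_mul]

lemma ti_val (n i x y : ℕ) (hn : 2 ≤ n) (hi : 2 ≤ i)
    (h : (x = i - 1 ∧ y = i) ∨ (x = i ∧ y = i - 1) ∨ (x = n + i - 1 ∧ y = n + i) ∨
      (x = n + i ∧ y = n + i - 1) ∨
      (x ≠ i - 1 ∧ x ≠ i ∧ x ≠ n + i - 1 ∧ x ≠ n + i ∧ y = x)) :
    t n i x = y := by
  rw [ti_apply n i hn hi]
  split_ifs <;> omega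

lemma cube_adj (n i : ℕ) (hn : 3 ≤ n) (hi : 2 ≤ i) (hin : i + 1 ≤ n) :
    (t n i * t n (i + 1)) ^ 3 = 1 := by
  have e1 : t n (i + 1) = Equiv.swap i (i + 1) * Equiv.swap (n + i) (n + i + 1) := by
    rw [t_decomp n (i + 1) (by omega), show i + 1 - 1 = i by omega,
      show n + (i + 1) - 1 = n + i by omega, show n + (i + 1) = n + i + 1 by omega]
  have hc : Commute (Equiv.swap (n + i - 1) (n + i)) (Equiv.swap i (i + 1)) :=
    swap_commute _ _ _ _ (by omega) (by omega) (by omega) (by omega)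
  have key : t n i * t n (i + 1) =
      (Equiv.swap (i - 1) i * Equiv.swap i (i + 1)) *
      (Equiv.swap (n + i - 1) (n + i) * Equiv.swap (n + i) (n + i + 1)) := by
    rw [t_decomp n i hi, e1]
    calc (Equiv.swap (i - 1) i * Equiv.swap (n + i - 1) (n + i)) *
          (Equiv.swap i (i + 1) * Equiv.swap (n + i) (n + i + 1))
        = Equiv.swap (i - 1) i * (Equiv.swap (n + i - 1) (n + i) * Equiv.swap i (i + 1)) *
          Equiv.swap (n + i) (n + i + 1) := by group
      _ = Equiv.swap (i - 1) i * (Equiv.swap i (i + 1) * Equiv.swap (n + i - 1) (n + i)) *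
          Equiv.swap (n + i) (n + i + 1) := by rw [hc.eq]
      _ = _ := by group
  rw [key]
  have hc2 : Commute (Equiv.swap (i - 1) i * Equiv.swap i (i + 1))
      (Equiv.swap (n + i - 1) (n + i) * Equiv.swap (n + i) (n + i + 1)) := by
    apply Commute.mul_left <;> apply Commute.mul_right <;>
      exact swap_commute _ _ _ _ (by omega) (by omega) (by omega) (by omega)
  rw [hc2.mul_pow, cube_swaps (i - 1) i (i + 1) (by omega) (by omega) (by omega),
    cube_swaps (n + i - 1) (n + i) (n + i + 1) (by omega) (by omega) (by omega), one_mul]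

lemma order3_adj (n i : ℕ) (hn : 3 ≤ n) (hi : 2 ≤ i) (hin : i + 1 ≤ n) :
    orderOf (t n i * t n (i + 1)) = 3 := by
  apply orderOf_eq_prime (cube_adj n i hn hi hin)
  apply ne_one_of _ (i + 1)
  rw [Equiv.Perm.mul_apply, ti_val n (i + 1) (i + 1) i (by omega) (by omega) (by omega),
    ti_val n i i (i - 1) (by omega) hi (by omega)]
  omega

lemma order2_far (n i j : ℕ) (hn : 2 ≤ n) (hi : 1 ≤ i) (hij : i + 2 ≤ j) (hj : j ≤ n) :
    orderOf (t n i * t n j) = 2 := by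
  have hne : t n i * t n j ≠ 1 := by
    apply ne_one_of _ j
    rcases eq_or_ne i 1 with rfl | hi1
    · rw [Equiv.Perm.mul_apply, ti_val n j j (j - 1) hn (by omega) (by omega),
        t1_val n (j - 1) (n + j - 1) (by omega) (by omega)]
      omega
    · rw [Equiv.Perm.mul_apply, ti_val n j j (j - 1) hn (by omega) (by omega),
        ti_val n i (j - 1) (j - 1) hn (by omega) (by omega)]
      omega
  apply orderOf_eq_prime _ hne
  rw [pow_two]
  rcases eq_or_ne i 1 with rfl | hi1
  · exact sq_of_comm _ _ (comm_t1 n j hn (by omega) hj) (t1_sq n (by omega))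
      (ti_sq n j hn (by omega))
  · exact sq_of_comm _ _ ((disj_far n i j hn (by omega) hij hj).commute)
      (ti_sq n i hn (by omega)) (ti_sq n j hn (by omega))

lemma order4_12 (n : ℕ) (hn : 2 ≤ n) : orderOf (t n 1 * t n 2) = 4 := by
  have conj : t n 1 * t n 2 * (t n 1)⁻¹ = Equiv.swap 1 (n + 2) * Equiv.swap (n + 1) 2 := by
    rw [conj_t1 n 2 hn le_rfl hn]
    rw [t1_val n (2 - 1) 1 (by omega) (by omega), t1_val n 2 (n + 2) (by omega) (by omega),
      t1_val n (n + 2 - 1) (n + 1) (by omega) (by omega),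
      t1_val n (n + 2) 2 (by omega) (by omega)]
  have h2d : t n 2 = Equiv.swap 1 2 * Equiv.swap (n + 1) (n + 2) := by
    rw [t_decomp n 2 le_rfl, show (2 : ℕ) - 1 = 1 by omega, show n + 2 - 1 = n + 1 by omega]
  have hg2 : (t n 1 * t n 2) ^ 2 = Equiv.swap 1 (n + 1) * Equiv.swap 2 (n + 2) := by
    have e : (t n 1 * t n 2) ^ 2 = (t n 1 * t n 2 * (t n 1)⁻¹) * t n 2 := by
      rw [t1_inv n (by omega), pow_two, ← mul_assoc]
    rw [e, conj, h2d]
    ext w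
    simp only [Equiv.Perm.mul_apply]
    by_cases c1 : w = 1
    · subst c1
      rw [swap_val (n + 1) (n + 2) 1 1 (by omega), swap_val 1 2 1 2 (by omega),
        swap_val (n + 1) 2 2 (n + 1) (by omega),
        swap_val 1 (n + 2) (n + 1) (n + 1) (by omega),
        swap_val 2 (n + 2) 1 1 (by omega), swap_val 1 (n + 1) 1 (n + 1) (by omega)]
    by_cases c2 : w = 2
    · subst c2
      rw [swap_val (n + 1) (n + 2) 2 2 (by omega), swap_val 1 2 2 1 (by omega),
        swap_val (n + 1) 2 1 1 (by omega), swap_val 1 (n + 2) 1 (n + 2) (by omega),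
        swap_val 2 (n + 2) 2 (n + 2) (by omega),
        swap_val 1 (n + 1) (n + 2) (n + 2) (by omega)]
    by_cases c3 : w = n + 1
    · subst c3
      rw [swap_val (n + 1) (n + 2) (n + 1) (n + 2) (by omega),
        swap_val 1 2 (n + 2) (n + 2) (by omega),
        swap_val (n + 1) 2 (n + 2) (n + 2) (by omega),
        swap_val 1 (n + 2) (n + 2) 1 (by omega),
        swap_val 2 (n + 2) (n + 1) (n + 1) (by omega),
        swap_val 1 (n + 1) (n + 1) 1 (by omega)]
    by_cases c4 : w = n + 2
    · subst c4
      rw [swap_val (n + 1) (n + 2) (n + 2) (n + 1) (by omega),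
        swap_val 1 2 (n + 1) (n + 1) (by omega),
        swap_val (n + 1) 2 (n + 1) 2 (by omega),
        swap_val 1 (n + 2) 2 2 (by omega),
        swap_val 2 (n + 2) (n + 2) 2 (by omega),
        swap_val 1 (n + 1) 2 2 (by omega)]
    · rw [swap_val (n + 1) (n + 2) w w (by omega), swap_val 1 2 w w (by omega),
        swap_val (n + 1) 2 w w (by omega), swap_val 1 (n + 2) w w (by omega),
        swap_val 2 (n + 2) w w (by omega), swap_val 1 (n + 1) w w (by omega)]
  have gv1 : (t n 1 * t n 2) 1 = n + 2 := by
    rw [Equiv.Perm.mul_apply, ti_val n 2 1 2 hn le_rfl (by omega),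
      t1_val n 2 (n + 2) (by omega) (by omega)]
  have hssq : (Equiv.swap 1 (n + 1) * Equiv.swap 2 (n + 2)) *
      (Equiv.swap 1 (n + 1) * Equiv.swap 2 (n + 2)) = 1 :=
    sq_of_comm _ _ (swap_commute 1 (n + 1) 2 (n + 2) (by omega) (by omega) (by omega)
      (by omega)).eq (Equiv.swap_mul_self _ _) (Equiv.swap_mul_self _ _)
  have h4 : (t n 1 * t n 2) ^ 4 = 1 := by
    rw [show (4 : ℕ) = 2 * 2 from rfl, pow_mul, hg2, pow_two, hssq]
  rw [orderOf_eq_iff (by norm_num)]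
  refine ⟨h4, ?_⟩
  intro m hm4 hm0
  interval_cases m
  · rw [pow_one]
    exact ne_one_of _ 1 (by rw [gv1]; omega)
  · rw [hg2]
    apply ne_one_of _ 1
    rw [Equiv.Perm.mul_apply, swap_val 2 (n + 2) 1 1 (by omega),
      swap_val 1 (n + 1) 1 (n + 1) (by omega)]
    omega
  · rw [pow_succ, hg2]
    apply ne_one_of _ 1
    rw [Equiv.Perm.mul_apply, gv1, Equiv.Perm.mul_apply,
      swap_val 2 (n + 2) (n + 2) 2 (by omega), swap_val 1 (n + 1) 2 2 (by omega)]
    omega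

/-- Each `t n i` is an involution, and the order of `t n i * t n j` is `1` if `i = j`,
`2` if `|i - j| ≥ 2`, `3` if `|i - j| = 1` and `{i,j} ≠ {1,2}`, and `4` if `{i,j} = {1,2}`. -/
theorem stmt3 (n : ℕ) (hn : 5 ≤ n) :
    (∀ i ∈ Finset.Icc 1 n, orderOf (t n i) = 2) ∧
    ∀ i ∈ Finset.Icc 1 n, ∀ j ∈ Finset.Icc 1 n,
      orderOf (t n i * t n j) =
        if i = j then 1
        else if i + 2 ≤ j ∨ j + 2 ≤ i then 2
        else if (i = 1 ∧ j = 2) ∨ (i = 2 ∧ j = 1) then 4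
        else 3 := by
  have hn2 : 2 ≤ n := by omega
  constructor
  · intro i hi
    rw [Finset.mem_Icc] at hi
    rcases eq_or_ne i 1 with rfl | hi1
    · refine orderOf_eq_prime (by rw [pow_two]; exact t1_sq n (by omega)) ?_
      apply ne_one_of _ 2
      rw [t1_val n 2 (n + 2) (by omega) (by omega)]
      omega
    · refine orderOf_eq_prime (by rw [pow_two]; exact ti_sq n i hn2 (by omega)) ?_
      apply ne_one_of _ i
      rw [ti_val n i i (i - 1) hn2 (by omega) (by omega)]
      omega
  · intro i hi j hj
    rw [Finset.mem_Icc] at hi hj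
    split_ifs with h1 h2 h3
    · subst h1
      rw [orderOf_eq_one_iff]
      rcases eq_or_ne i 1 with rfl | hi1
      · exact t1_sq n (by omega)
      · exact ti_sq n i hn2 (by omega)
    · rcases h2 with h | h
      · exact order2_far n i j hn2 hi.1 h hj.2
      · rw [orderOf_mul_comm']
        exact order2_far n j i hn2 hj.1 h hi.2
    · rcases h3 with ⟨rfl, rfl⟩ | ⟨rfl, rfl⟩
      · exact order4_12 n hn2
      · rw [orderOf_mul_comm']
        exact order4_12 n hn2
    · rcases (by omega : (2 ≤ i ∧ j = i + 1) ∨ (2 ≤ j ∧ i = j + 1)) with ⟨ha, rfl⟩ | ⟨ha, rfl⟩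
      · exact order3_adj n i (by omega) ha (by omega)
      · rw [orderOf_mul_comm']
        exact order3_adj n j (by omega) ha (by omega)
end

section
/- Let (G, {s₁,…,s_r}) be a string group generated by involutions such that G_{1,…,r−1} and G_{2,…,r} are string C-groups and G_{1,…,r−1} ∩ G_{2,…,r} = G_{2,…,r−1}. Then (G, {s₁,…,s_r}) is a string C-group. -/
/-- For a tuple `s : Fin r → G` and `J ⊆ {1,…,r}`, the subgroup `G_J = ⟨sⱼ : j ∈ J⟩`. -/
def subJ {G : Type*} [Group G] {r : ℕ} (s : Fin r → G) (J : Set (Fin r)) : Subgroup G :=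
  Subgroup.closure (s '' J)

/-- The intersection property `G_J ⊓ G_K = G_{J ∩ K}` holds for all subsets `J, K` of `A`;
`IsCOn s Set.univ` says that `(⟨s⟩, s)` is a string C-group provided `s` is a string
group generated by involutions. -/
def IsCOn {G : Type*} [Group G] {r : ℕ} (s : Fin r → G) (A : Set (Fin r)) : Prop :=
  ∀ J ⊆ A, ∀ K ⊆ A, subJ s J ⊓ subJ s K = subJ s (J ∩ K)

section Aux

variable {G : Type*} [Group G] {r : ℕ} {s : Fin r → G}

lemma subJ_mono {J K : Set (Fin r)} (h : J ⊆ K) : subJ s J ≤ subJ s K :=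
  Subgroup.closure_mono (Set.image_mono h)

lemma subJ_inter_le {J K : Set (Fin r)} : subJ s (J ∩ K) ≤ subJ s J ⊓ subJ s K :=
  le_inf (subJ_mono Set.inter_subset_left) (subJ_mono Set.inter_subset_right)

lemma subJ_commute {J K : Set (Fin r)}
    (h : ∀ i ∈ J, ∀ j ∈ K, Commute (s i) (s j)) :
    ∀ a ∈ subJ s J, ∀ b ∈ subJ s K, Commute a b := by
  intro a ha b hb
  have h1 : ∀ j ∈ K, Commute a (s j) := by
    intro j hj
    have hle : subJ s J ≤ Subgroup.centralizer {s j} := by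
      refine (Subgroup.closure_le _).2 ?_
      rintro x ⟨i, hi, rfl⟩
      rw [SetLike.mem_coe, Subgroup.mem_centralizer_iff]
      rintro y hy
      rw [Set.mem_singleton_iff] at hy; subst hy
      exact ((h i hi j hj).symm).eq
    have := Subgroup.mem_centralizer_iff.1 (hle ha) (s j) rfl
    exact this.symm
  have hle : subJ s K ≤ Subgroup.centralizer {a} := by
    refine (Subgroup.closure_le _).2 ?_
    rintro x ⟨j, hj, rfl⟩
    rw [SetLike.mem_coe, Subgroup.mem_centralizer_iff]
    rintro y hy
    rw [Set.mem_singleton_iff] at hy; subst hy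
    exact (h1 j hj).eq
  exact Subgroup.mem_centralizer_iff.1 (hle hb) a rfl

lemma mem_sup_of_commute {H K : Subgroup G}
    (hc : ∀ a ∈ H, ∀ b ∈ K, Commute a b) {x : G} (hx : x ∈ H ⊔ K) :
    ∃ a ∈ H, ∃ b ∈ K, x = a * b := by
  let S : Subgroup G :=
  { carrier := {x | ∃ a ∈ H, ∃ b ∈ K, x = a * b}
    one_mem' := ⟨1, H.one_mem, 1, K.one_mem, (mul_one 1).symm⟩
    mul_mem' := by
      rintro x y ⟨a, ha, b, hb, rfl⟩ ⟨c, hc', d, hd, rfl⟩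
      refine ⟨a * c, H.mul_mem ha hc', b * d, K.mul_mem hb hd, ?_⟩
      exact ((hc c hc' b hb).symm).mul_mul_mul_comm a d
    inv_mem' := by
      rintro x ⟨a, ha, b, hb, rfl⟩
      refine ⟨a⁻¹, H.inv_mem ha, b⁻¹, K.inv_mem hb, ?_⟩
      rw [mul_inv_rev, ((hc a ha b hb).inv_inv).eq] }
  have hS : H ⊔ K ≤ S := by
    refine sup_le (fun a ha => ?_) (fun b hb => ?_)
    · exact ⟨a, ha, 1, K.one_mem, (mul_one a).symm⟩
    · exact ⟨1, H.one_mem, b, hb, (one_mul b).symm⟩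
  exact hS hx

lemma subJ_le_sup {J J₁ J₂ : Set (Fin r)} (h : ∀ i ∈ J, i ∈ J₁ ∨ i ∈ J₂) :
    subJ s J ≤ subJ s J₁ ⊔ subJ s J₂ := by
  refine (Subgroup.closure_le _).2 ?_
  rintro x ⟨i, hi, rfl⟩
  rcases h i hi with h' | h'
  · exact SetLike.le_def.1 le_sup_left (Subgroup.subset_closure (Set.mem_image_of_mem s h'))
  · exact SetLike.le_def.1 le_sup_right (Subgroup.subset_closure (Set.mem_image_of_mem s h'))

end Aux

/-- If `(G, {s₁,…,s_r})` is a string group generated by involutions such that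
`G_{1,…,r-1}` and `G_{2,…,r}` are string C-groups and
`G_{1,…,r-1} ⊓ G_{2,…,r} = G_{2,…,r-1}`, then `(G, {s₁,…,s_r})` is a string C-group. -/
theorem stmt7 {G : Type*} [Group G] {r : ℕ} (s : Fin r → G)
    (hinv : ∀ i, orderOf (s i) = 2)
    (hgen : Subgroup.closure (Set.range s) = ⊤)
    (hcomm : ∀ i j : Fin r, (i : ℕ) + 2 ≤ (j : ℕ) ∨ (j : ℕ) + 2 ≤ (i : ℕ) →
      Commute (s i) (s j))
    (h1 : IsCOn s {i | (i : ℕ) + 1 < r})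
    (h2 : IsCOn s {i | 0 < (i : ℕ)})
    (hint : subJ s {i | (i : ℕ) + 1 < r} ⊓ subJ s {i | 0 < (i : ℕ)}
      = subJ s ({i | (i : ℕ) + 1 < r} ∩ {i | 0 < (i : ℕ)})) :
    IsCOn s Set.univ := by
  classical
  set A : Set (Fin r) := {i | (i : ℕ) + 1 < r} with hA
  set B : Set (Fin r) := {i | 0 < (i : ℕ)} with hB
  -- commuting of "left of m" and "right of m" pieces
  have hcLG : ∀ (m : ℕ) (J₁ J₂ : Set (Fin r)), (∀ i ∈ J₁, (i : ℕ) < m) →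
      (∀ j ∈ J₂, m < (j : ℕ)) →
      ∀ a ∈ subJ s J₁, ∀ b ∈ subJ s J₂, Commute a b := by
    intro m J₁ J₂ hJ₁ hJ₂
    refine subJ_commute (fun i hi j hj => hcomm i j (Or.inl ?_))
    have := hJ₁ i hi; have := hJ₂ j hj; omega
  -- mixed case: J ⊆ A, K ⊆ B
  have L0 : ∀ J ⊆ A, ∀ K ⊆ B, subJ s J ⊓ subJ s K = subJ s (J ∩ K) := by
    intro J hJ K hK
    have hstep : subJ s J ⊓ subJ s K ≤ subJ s (A ∩ B) :=
      le_trans (inf_le_inf (subJ_mono hJ) (subJ_mono hK)) (le_of_eq hint)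
    have e1 : subJ s J ⊓ subJ s K = (subJ s J ⊓ subJ s K) ⊓ subJ s (A ∩ B) :=
      (inf_eq_left.2 hstep).symm
    rw [e1, inf_assoc, h2 K hK (A ∩ B) Set.inter_subset_right,
      h1 J hJ (K ∩ (A ∩ B)) (fun i hi => hi.2.1)]
    congr 1
    ext i
    constructor
    · rintro ⟨hiJ, hiK, _⟩; exact ⟨hiJ, hiK⟩
    · rintro ⟨hiJ, hiK⟩; exact ⟨hiJ, hiK, hJ hiJ, hK hiK⟩
  -- key claim (*): A absorbs intersections
  have LA : ∀ K : Set (Fin r), subJ s A ⊓ subJ s K = subJ s (A ∩ K) := by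
    intro K
    by_cases hKA : K ⊆ A
    · exact h1 A subset_rfl K hKA
    by_cases hKB : K ⊆ B
    · exact L0 A subset_rfl K hKB
    obtain ⟨iN, hiNK, hiNA⟩ := Set.not_subset.1 hKA
    obtain ⟨i0, hi0K, hi0B⟩ := Set.not_subset.1 hKB
    have hiN' : ¬ ((iN : ℕ) + 1 < r) := hiNA
    have hi0' : ¬ (0 < (i0 : ℕ)) := hi0B
    by_cases hU : K = Set.univ
    · subst hU
      rw [Set.inter_univ]
      exact inf_eq_left.2 (subJ_mono (Set.subset_univ A))
    obtain ⟨m, hmK⟩ : ∃ m, m ∉ K := by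
      by_contra hcon; push_neg at hcon; exact hU (Set.eq_univ_of_forall hcon)
    have hm0 : 0 < (m : ℕ) := by
      have hne : (m : ℕ) ≠ (i0 : ℕ) := fun h => hmK (Fin.ext h ▸ hi0K)
      omega
    have hmr : (m : ℕ) + 1 < r := by
      have hne : (m : ℕ) ≠ (iN : ℕ) := fun h => hmK (Fin.ext h ▸ hiNK)
      have := m.isLt; have := iN.isLt; omega
    refine le_antisymm ?_ subJ_inter_le
    intro g hg
    obtain ⟨hgA, hgK⟩ := Subgroup.mem_inf.1 hg
    have hmem : g ∈ subJ s (K ∩ {i | (i : ℕ) < (m : ℕ)}) ⊔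
        subJ s (K ∩ {i | (m : ℕ) < (i : ℕ)}) := by
      refine subJ_le_sup (fun i hi => ?_) hgK
      have hne : (i : ℕ) ≠ (m : ℕ) := fun h => hmK (Fin.ext h ▸ hi)
      rcases Nat.lt_or_ge (i : ℕ) (m : ℕ) with h' | h'
      · exact Or.inl ⟨hi, h'⟩
      · exact Or.inr ⟨hi, show (m : ℕ) < (i : ℕ) by omega⟩
    obtain ⟨a, ha, b, hb, rfl⟩ :=
      mem_sup_of_commute (hcLG (m : ℕ) _ _ (fun i hi => hi.2) (fun j hj => hj.2)) hmem
    have haA : a ∈ subJ s A := by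
      refine subJ_mono ?_ ha
      intro i hi
      have h' : (i : ℕ) < (m : ℕ) := hi.2
      exact show (i : ℕ) + 1 < r by omega
    have hbA : b ∈ subJ s A := by
      have hb' : b = a⁻¹ * (a * b) := by group
      rw [hb']; exact mul_mem (inv_mem haA) hgA
    have hbB : b ∈ subJ s B := by
      refine subJ_mono ?_ hb
      intro i hi
      have h' : (m : ℕ) < (i : ℕ) := hi.2
      exact show 0 < (i : ℕ) by omega
    have hbAB : b ∈ subJ s (A ∩ B) := by
      rw [← hint]; exact Subgroup.mem_inf.2 ⟨hbA, hbB⟩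
    have hb2 : b ∈ subJ s ((A ∩ B) ∩ (K ∩ {i | (m : ℕ) < (i : ℕ)})) := by
      rw [← h2 (A ∩ B) Set.inter_subset_right (K ∩ {i | (m : ℕ) < (i : ℕ)})
        (fun i hi => show 0 < (i : ℕ) by
          have h' : (m : ℕ) < (i : ℕ) := hi.2; omega)]
      exact Subgroup.mem_inf.2 ⟨hbAB, hb⟩
    have hbfin : b ∈ subJ s (A ∩ K) := by
      refine subJ_mono ?_ hb2
      intro i hi
      exact Set.mem_inter hi.1.1 hi.2.1
    have hafin : a ∈ subJ s (A ∩ K) := by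
      refine subJ_mono ?_ ha
      intro i hi
      have h' : (i : ℕ) < (m : ℕ) := hi.2
      exact Set.mem_inter (show (i : ℕ) + 1 < r by omega) hi.1
    exact mul_mem hafin hbfin
  -- key claim (**): B absorbs intersections
  have LB : ∀ K : Set (Fin r), subJ s B ⊓ subJ s K = subJ s (B ∩ K) := by
    intro K
    by_cases hKB : K ⊆ B
    · exact h2 B subset_rfl K hKB
    by_cases hKA : K ⊆ A
    · rw [inf_comm, L0 K hKA B subset_rfl, Set.inter_comm]
    obtain ⟨iN, hiNK, hiNA⟩ := Set.not_subset.1 hKA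
    obtain ⟨i0, hi0K, hi0B⟩ := Set.not_subset.1 hKB
    have hiN' : ¬ ((iN : ℕ) + 1 < r) := hiNA
    have hi0' : ¬ (0 < (i0 : ℕ)) := hi0B
    by_cases hU : K = Set.univ
    · subst hU
      rw [Set.inter_univ]
      exact inf_eq_left.2 (subJ_mono (Set.subset_univ B))
    obtain ⟨m, hmK⟩ : ∃ m, m ∉ K := by
      by_contra hcon; push_neg at hcon; exact hU (Set.eq_univ_of_forall hcon)
    have hm0 : 0 < (m : ℕ) := by
      have hne : (m : ℕ) ≠ (i0 : ℕ) := fun h => hmK (Fin.ext h ▸ hi0K)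
      omega
    have hmr : (m : ℕ) + 1 < r := by
      have hne : (m : ℕ) ≠ (iN : ℕ) := fun h => hmK (Fin.ext h ▸ hiNK)
      have := m.isLt; have := iN.isLt; omega
    refine le_antisymm ?_ subJ_inter_le
    intro g hg
    obtain ⟨hgB, hgK⟩ := Subgroup.mem_inf.1 hg
    have hmem : g ∈ subJ s (K ∩ {i | (i : ℕ) < (m : ℕ)}) ⊔
        subJ s (K ∩ {i | (m : ℕ) < (i : ℕ)}) := by
      refine subJ_le_sup (fun i hi => ?_) hgK
      have hne : (i : ℕ) ≠ (m : ℕ) := fun h => hmK (Fin.ext h ▸ hi)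
      rcases Nat.lt_or_ge (i : ℕ) (m : ℕ) with h' | h'
      · exact Or.inl ⟨hi, h'⟩
      · exact Or.inr ⟨hi, show (m : ℕ) < (i : ℕ) by omega⟩
    obtain ⟨a, ha, b, hb, rfl⟩ :=
      mem_sup_of_commute (hcLG (m : ℕ) _ _ (fun i hi => hi.2) (fun j hj => hj.2)) hmem
    have hbB : b ∈ subJ s B := by
      refine subJ_mono ?_ hb
      intro i hi
      have h' : (m : ℕ) < (i : ℕ) := hi.2
      exact show 0 < (i : ℕ) by omega
    have haB : a ∈ subJ s B := by
      have ha' : a = (a * b) * b⁻¹ := by group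
      rw [ha']; exact mul_mem hgB (inv_mem hbB)
    have haA : a ∈ subJ s A := by
      refine subJ_mono ?_ ha
      intro i hi
      have h' : (i : ℕ) < (m : ℕ) := hi.2
      exact show (i : ℕ) + 1 < r by omega
    have haAB : a ∈ subJ s (A ∩ B) := by
      rw [← hint]; exact Subgroup.mem_inf.2 ⟨haA, haB⟩
    have ha2 : a ∈ subJ s ((A ∩ B) ∩ (K ∩ {i | (i : ℕ) < (m : ℕ)})) := by
      rw [← h1 (A ∩ B) Set.inter_subset_left (K ∩ {i | (i : ℕ) < (m : ℕ)})
        (fun i hi => show (i : ℕ) + 1 < r by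
          have h' : (i : ℕ) < (m : ℕ) := hi.2; omega)]
      exact Subgroup.mem_inf.2 ⟨haAB, ha⟩
    have hafin : a ∈ subJ s (B ∩ K) := by
      refine subJ_mono ?_ ha2
      intro i hi
      exact Set.mem_inter hi.1.2 hi.2.1
    have hbfin : b ∈ subJ s (B ∩ K) := by
      refine subJ_mono ?_ hb
      intro i hi
      have h' : (m : ℕ) < (i : ℕ) := hi.2
      exact Set.mem_inter (show 0 < (i : ℕ) by omega) hi.1
    exact mul_mem hafin hbfin
  -- initial segments absorb intersections
  have LSlt : ∀ t : ℕ, t < r → ∀ K : Set (Fin r),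
      subJ s {i | (i : ℕ) < t} ⊓ subJ s K = subJ s ({i | (i : ℕ) < t} ∩ K) := by
    intro t ht K
    have hsub : {i : Fin r | (i : ℕ) < t} ⊆ A := fun i hi =>
      show (i : ℕ) + 1 < r by have : (i : ℕ) < t := hi; omega
    have e1 : subJ s {i : Fin r | (i : ℕ) < t} ⊓ subJ s K
        = subJ s {i : Fin r | (i : ℕ) < t} ⊓ (subJ s A ⊓ subJ s K) := by
      rw [← inf_assoc, inf_eq_left.2 (subJ_mono hsub)]
    rw [e1, LA K, h1 _ hsub (A ∩ K) Set.inter_subset_left]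
    congr 1
    ext i
    constructor
    · rintro ⟨hi1, _, hiK⟩; exact ⟨hi1, hiK⟩
    · rintro ⟨hi1, hiK⟩; exact ⟨hi1, hsub hi1, hiK⟩
  -- final segments absorb intersections
  have LSgt : ∀ t : ℕ, ∀ K : Set (Fin r),
      subJ s {i | t < (i : ℕ)} ⊓ subJ s K = subJ s ({i | t < (i : ℕ)} ∩ K) := by
    intro t K
    have hsub : {i : Fin r | t < (i : ℕ)} ⊆ B := fun i hi =>
      show 0 < (i : ℕ) by have : t < (i : ℕ) := hi; omega
    have e1 : subJ s {i : Fin r | t < (i : ℕ)} ⊓ subJ s K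
        = subJ s {i : Fin r | t < (i : ℕ)} ⊓ (subJ s B ⊓ subJ s K) := by
      rw [← inf_assoc, inf_eq_left.2 (subJ_mono hsub)]
    rw [e1, LB K, h2 _ hsub (B ∩ K) Set.inter_subset_left]
    congr 1
    ext i
    constructor
    · rintro ⟨hi1, _, hiK⟩; exact ⟨hi1, hiK⟩
    · rintro ⟨hi1, hiK⟩; exact ⟨hi1, hsub hi1, hiK⟩
  -- the crux: removing an interior generator
  have LCrux : ∀ m : Fin r, 0 < (m : ℕ) → (m : ℕ) + 1 < r → ∀ K : Set (Fin r),
      subJ s {i | i ≠ m} ⊓ subJ s K ≤ subJ s (K \ {m}) := by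
    intro m hm0 hmr K x hx
    obtain ⟨hx1, hxK⟩ := Subgroup.mem_inf.1 hx
    have hmem : x ∈ subJ s {i : Fin r | (i : ℕ) < (m : ℕ)} ⊔
        subJ s {i : Fin r | (m : ℕ) < (i : ℕ)} := by
      refine subJ_le_sup (fun i hi => ?_) hx1
      have hne : (i : ℕ) ≠ (m : ℕ) := fun h => hi (Fin.ext h)
      rcases Nat.lt_or_ge (i : ℕ) (m : ℕ) with h' | h'
      · exact Or.inl h'
      · exact Or.inr (show (m : ℕ) < (i : ℕ) by omega)
    obtain ⟨a, ha, b, hb, rfl⟩ :=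
      mem_sup_of_commute (hcLG (m : ℕ) _ _ (fun i hi => hi) (fun j hj => hj)) hmem
    have hb2 : b ∈ subJ s ({i : Fin r | (m : ℕ) < (i : ℕ)} ∩
        ({i : Fin r | (i : ℕ) < (m : ℕ)} ∪ K)) := by
      rw [← LSgt (m : ℕ) ({i : Fin r | (i : ℕ) < (m : ℕ)} ∪ K)]
      refine Subgroup.mem_inf.2 ⟨hb, ?_⟩
      have hb' : b = a⁻¹ * (a * b) := by group
      rw [hb']
      exact mul_mem (inv_mem (subJ_mono Set.subset_union_left ha))
        (subJ_mono Set.subset_union_right hxK)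
    have ha2 : a ∈ subJ s ({i : Fin r | (i : ℕ) < (m : ℕ)} ∩
        (K ∪ {i : Fin r | (m : ℕ) < (i : ℕ)})) := by
      rw [← LSlt (m : ℕ) m.isLt (K ∪ {i : Fin r | (m : ℕ) < (i : ℕ)})]
      refine Subgroup.mem_inf.2 ⟨ha, ?_⟩
      have ha' : a = (a * b) * b⁻¹ := by group
      rw [ha']
      exact mul_mem (subJ_mono Set.subset_union_left hxK)
        (inv_mem (subJ_mono Set.subset_union_right hb))
    have hafin : a ∈ subJ s (K \ {m}) := by
      refine subJ_mono ?_ ha2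
      intro i hi
      obtain ⟨hi1, hi2⟩ := hi
      have hilt : (i : ℕ) < (m : ℕ) := hi1
      rcases hi2 with hiK | higt
      · refine Set.mem_diff_singleton.2 ⟨hiK, ?_⟩
        intro h; subst h; omega
      · have h' : (m : ℕ) < (i : ℕ) := higt
        omega
    have hbfin : b ∈ subJ s (K \ {m}) := by
      refine subJ_mono ?_ hb2
      intro i hi
      obtain ⟨hi1, hi2⟩ := hi
      have higt : (m : ℕ) < (i : ℕ) := hi1
      rcases hi2 with hilt | hiK
      · have h' : (i : ℕ) < (m : ℕ) := hilt
        omega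
      · refine Set.mem_diff_singleton.2 ⟨hiK, ?_⟩
        intro h; subst h; omega
    exact mul_mem hafin hbfin
  -- main induction on the number of elements of K outside J
  have main : ∀ n : ℕ, ∀ J K : Set (Fin r), (K \ J).ncard ≤ n →
      subJ s J ⊓ subJ s K = subJ s (J ∩ K) := by
    intro n
    induction n with
    | zero =>
      intro J K h
      have hKJ : K ⊆ J := by
        have he : K \ J = ∅ := by
          rw [← Set.ncard_eq_zero (Set.toFinite _)]; omega
        intro i hi
        by_contra hiJ
        exact absurd he (Set.nonempty_iff_ne_empty.1 ⟨i, hi, hiJ⟩)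
      rw [Set.inter_eq_self_of_subset_right hKJ]
      exact inf_eq_right.2 (subJ_mono hKJ)
    | succ n ih =>
      intro J K h
      by_cases hKJ : K ⊆ J
      · rw [Set.inter_eq_self_of_subset_right hKJ]
        exact inf_eq_right.2 (subJ_mono hKJ)
      obtain ⟨m, hmK, hmJ⟩ := Set.not_subset.1 hKJ
      by_cases hm0 : 0 < (m : ℕ)
      · by_cases hmr : (m : ℕ) + 1 < r
        · -- interior m : use the crux
          have hJm : J ⊆ {i : Fin r | i ≠ m} := fun i hi (h' : i = m) => hmJ (h' ▸ hi)
          have hkey : subJ s J ⊓ subJ s K ≤ subJ s (K \ {m}) :=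
            le_trans (inf_le_inf (subJ_mono hJm) le_rfl) (LCrux m hm0 hmr K)
          have heq : subJ s J ⊓ subJ s K = subJ s J ⊓ subJ s (K \ {m}) :=
            le_antisymm (le_inf inf_le_left hkey)
              (inf_le_inf le_rfl (subJ_mono Set.diff_subset))
          have hcard : ((K \ {m}) \ J).ncard ≤ n := by
            have hss : (K \ {m}) \ J ⊂ K \ J := by
              refine (Set.ssubset_iff_of_subset ?_).2 ?_
              · intro i hi
                exact Set.mem_diff_of_mem hi.1.1 hi.2
              · refine ⟨m, Set.mem_diff_of_mem hmK hmJ, ?_⟩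
                intro h'
                exact h'.1.2 rfl
            have := Set.ncard_lt_ncard hss (Set.toFinite _)
            omega
          rw [heq, ih J (K \ {m}) hcard]
          congr 1
          ext i
          constructor
          · rintro ⟨hiJ, hiK, _⟩; exact ⟨hiJ, hiK⟩
          · rintro ⟨hiJ, hiK⟩
            exact ⟨hiJ, hiK, fun h' => by
              rw [Set.mem_singleton_iff] at h'; exact hmJ (h' ▸ hiJ)⟩
        · -- m is the last index : J ⊆ A
          have hJA : J ⊆ A := by
            intro i hi
            have hne : (i : ℕ) ≠ (m : ℕ) := fun h' => hmJ (Fin.ext h' ▸ hi)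
            have := i.isLt; have := m.isLt
            exact show (i : ℕ) + 1 < r by omega
          have e1 : subJ s J ⊓ subJ s K = subJ s J ⊓ (subJ s A ⊓ subJ s K) := by
            rw [← inf_assoc, inf_eq_left.2 (subJ_mono hJA)]
          rw [e1, LA K, h1 J hJA (A ∩ K) Set.inter_subset_left]
          congr 1
          ext i
          constructor
          · rintro ⟨hiJ, _, hiK⟩; exact ⟨hiJ, hiK⟩
          · rintro ⟨hiJ, hiK⟩; exact ⟨hiJ, hJA hiJ, hiK⟩
      · -- m is the first index : J ⊆ B
        have hJB : J ⊆ B := by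
          intro i hi
          have hne : (i : ℕ) ≠ (m : ℕ) := fun h' => hmJ (Fin.ext h' ▸ hi)
          exact show 0 < (i : ℕ) by omega
        have e1 : subJ s J ⊓ subJ s K = subJ s J ⊓ (subJ s B ⊓ subJ s K) := by
          rw [← inf_assoc, inf_eq_left.2 (subJ_mono hJB)]
        rw [e1, LB K, h2 J hJB (B ∩ K) Set.inter_subset_left]
        congr 1
        ext i
        constructor
        · rintro ⟨hiJ, _, hiK⟩; exact ⟨hiJ, hiK⟩
        · rintro ⟨hiJ, hiK⟩; exact ⟨hiJ, hJB hiJ, hiK⟩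
  intro J _ K _
  exact main ((K \ J).ncard) J K le_rfl
end

section
/- Let n ≥ 6 be even and define in Sym(2n): t₁ = (1,2)(n+1,n+2)(n−1,2n−1)(n,2n), t₂ = ∏ of (2k,2k+1)(n+2k,n+2k+1) for 1 ≤ k ≤ (n−2)/2, and t₃ = ∏ of (2k+1,2k+2)(n+2k+1,n+2k+2) for 1 ≤ k ≤ (n−2)/2. Then t₁t₂ has order 12, t₂t₃ has order n−1, and t₁t₃ has order 2. -/
/-- `t₁ = (1,2)(n+1,n+2)(n-1,2n-1)(n,2n)` -/
def u1 (n : ℕ) : Equiv.Perm ℕ :=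
  Equiv.swap 1 2 * Equiv.swap (n + 1) (n + 2) *
    Equiv.swap (n - 1) (2 * n - 1) * Equiv.swap n (2 * n)

/-- `t₂ = (2,3)(4,5)⋯(n-2,n-1)(n+2,n+3)⋯(2n-2,2n-1)` -/
def u2 (n : ℕ) : Equiv.Perm ℕ :=
  ((List.range ((n - 2) / 2)).map fun k =>
    Equiv.swap (2 * (k + 1)) (2 * (k + 1) + 1) *
      Equiv.swap (n + 2 * (k + 1)) (n + 2 * (k + 1) + 1)).prod

/-- `t₃ = (3,4)(5,6)⋯(n-1,n)(n+3,n+4)⋯(2n-1,2n)` -/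
def u3 (n : ℕ) : Equiv.Perm ℕ :=
  ((List.range ((n - 2) / 2)).map fun k =>
    Equiv.swap (2 * (k + 1) + 1) (2 * (k + 1) + 2) *
      Equiv.swap (n + 2 * (k + 1) + 1) (n + 2 * (k + 1) + 2)).prod

/-- closed form of `u1` -/
def F1 (n x : ℕ) : ℕ :=
  if x = 1 then 2 else if x = 2 then 1 else
  if x = n + 1 then n + 2 else if x = n + 2 then n + 1 else
  if x = n - 1 then 2 * n - 1 else if x = 2 * n - 1 then n - 1 else
  if x = n then 2 * n else if x = 2 * n then n else x

/-- closed form of `u2` -/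
def F2 (n x : ℕ) : ℕ :=
  if (2 ≤ x ∧ x < n) ∨ (n + 2 ≤ x ∧ x < 2 * n) then
    (if x % 2 = 0 then x + 1 else x - 1) else x

/-- closed form of `u3` -/
def F3 (n x : ℕ) : ℕ :=
  if (3 ≤ x ∧ x ≤ n) ∨ (n + 3 ≤ x ∧ x ≤ 2 * n) then
    (if x % 2 = 1 then x + 1 else x - 1) else x

/-- the cycle function of `u2 * u3` on `[2, n]` -/
def eC (n p : ℕ) : ℕ :=
  if p = 0 then 2 else if 2 * p + 2 ≤ n then 2 * p + 1 else 2 * n - 2 * p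

set_option maxHeartbeats 2000000 in
lemma hu1 (n : ℕ) (hn : 6 ≤ n) (x : ℕ) : u1 n x = F1 n x := by
  rw [u1]
  simp only [Equiv.Perm.mul_apply, Equiv.swap_apply_def, F1]
  split_ifs <;> omega

lemma u2gen (n : ℕ) (hn : 6 ≤ n) (hn2 : n % 2 = 0) :
    ∀ m, 2 * m + 2 ≤ n → ∀ x,
    ((((List.range m).map fun k =>
      Equiv.swap (2 * (k + 1)) (2 * (k + 1) + 1) *
        Equiv.swap (n + 2 * (k + 1)) (n + 2 * (k + 1) + 1)).prod : Equiv.Perm ℕ)) x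
      = if (2 ≤ x ∧ x < 2 * m + 2) ∨ (n + 2 ≤ x ∧ x < n + 2 * m + 2) then
          (if x % 2 = 0 then x + 1 else x - 1) else x := by
  intro m
  induction m with
  | zero =>
    intro _ x
    simp only [List.range_zero, List.map_nil, List.prod_nil, Equiv.Perm.one_apply]
    split_ifs <;> omega
  | succ m ih =>
    intro hm x
    rw [List.range_succ, List.map_append, List.prod_append, List.map_cons, List.map_nil,
      List.prod_cons, List.prod_nil, mul_one, Equiv.Perm.mul_apply, Equiv.Perm.mul_apply,
      Equiv.swap_apply_def, Equiv.swap_apply_def]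
    split_ifs <;> rw [ih (by omega)] <;> split_ifs <;> omega

lemma u3gen (n : ℕ) (hn : 6 ≤ n) (hn2 : n % 2 = 0) :
    ∀ m, 2 * m + 2 ≤ n → ∀ x,
    ((((List.range m).map fun k =>
      Equiv.swap (2 * (k + 1) + 1) (2 * (k + 1) + 2) *
        Equiv.swap (n + 2 * (k + 1) + 1) (n + 2 * (k + 1) + 2)).prod : Equiv.Perm ℕ)) x
      = if (3 ≤ x ∧ x < 2 * m + 3) ∨ (n + 3 ≤ x ∧ x < n + 2 * m + 3) then
          (if x % 2 = 1 then x + 1 else x - 1) else x := by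
  intro m
  induction m with
  | zero =>
    intro _ x
    simp only [List.range_zero, List.map_nil, List.prod_nil, Equiv.Perm.one_apply]
    split_ifs <;> omega
  | succ m ih =>
    intro hm x
    rw [List.range_succ, List.map_append, List.prod_append, List.map_cons, List.map_nil,
      List.prod_cons, List.prod_nil, mul_one, Equiv.Perm.mul_apply, Equiv.Perm.mul_apply,
      Equiv.swap_apply_def, Equiv.swap_apply_def]
    split_ifs <;> rw [ih (by omega)] <;> split_ifs <;> omega

lemma hu2 (n : ℕ) (hn : 6 ≤ n) (hn2 : n % 2 = 0) (x : ℕ) : u2 n x = F2 n x := by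
  rw [u2, u2gen n hn hn2 ((n - 2) / 2) (by omega) x, F2]
  split_ifs <;> omega

lemma hu3 (n : ℕ) (hn : 6 ≤ n) (hn2 : n % 2 = 0) (x : ℕ) : u3 n x = F3 n x := by
  rw [u3, u3gen n hn hn2 ((n - 2) / 2) (by omega) x, F3]
  split_ifs <;> omega

lemma fixpow (g : Equiv.Perm ℕ) (x : ℕ) (h : g x = x) : ∀ k, (g ^ k) x = x
  | 0 => by simp
  | k + 1 => by rw [pow_succ, Equiv.Perm.mul_apply, h, fixpow g x h k]

section parts
variable {n : ℕ} (hn : 6 ≤ n) (hn2 : n % 2 = 0)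

/-! ### order of u1 * u3 -/

set_option maxHeartbeats 16000000 in
include hn hn2 in
lemma part_a : orderOf (u1 n * u3 n) = 2 := by
  haveI : Fact (Nat.Prime 2) := ⟨Nat.prime_two⟩
  set P := u1 n * u3 n with hP
  have ev : ∀ x z y : ℕ, F3 n x = z → F1 n z = y → P x = y := by
    intro x z y h1 h2
    rw [hP, Equiv.Perm.mul_apply, hu3 n hn hn2, hu1 n hn, h1, h2]
  have a1 : P 1 = 2 := ev 1 1 2
    (by simp only [F3]; split_ifs <;> first | contradiction | omega)
    (by simp only [F1]; split_ifs <;> first | contradiction | omega)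
  have a2 : P 2 = 1 := ev 2 2 1
    (by simp only [F3]; split_ifs <;> first | contradiction | omega)
    (by simp only [F1]; split_ifs <;> first | contradiction | omega)
  have c1 : P (n - 1) = 2 * n := ev (n - 1) n (2 * n)
    (by simp only [F3]; split_ifs <;> first | contradiction | omega)
    (by simp only [F1]; split_ifs <;> first | contradiction | omega)
  have c2 : P (2 * n) = n - 1 := ev (2 * n) (2 * n - 1) (n - 1)
    (by simp only [F3]; split_ifs <;> first | contradiction | omega)
    (by simp only [F1]; split_ifs <;> first | contradiction | omega)
  have d1 : P n = 2 * n - 1 := ev n (n - 1) (2 * n - 1)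
    (by simp only [F3]; split_ifs <;> first | contradiction | omega)
    (by simp only [F1]; split_ifs <;> first | contradiction | omega)
  have d2 : P (2 * n - 1) = n := ev (2 * n - 1) (2 * n) n
    (by simp only [F3]; split_ifs <;> first | contradiction | omega)
    (by simp only [F1]; split_ifs <;> first | contradiction | omega)
  have e1 : P (n + 1) = n + 2 := ev (n + 1) (n + 1) (n + 2)
    (by simp only [F3]; split_ifs <;> first | contradiction | omega)
    (by simp only [F1]; split_ifs <;> first | contradiction | omega)
  have e2 : P (n + 2) = n + 1 := ev (n + 2) (n + 2) (n + 1)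
    (by simp only [F3]; split_ifs <;> first | contradiction | omega)
    (by simp only [F1]; split_ifs <;> first | contradiction | omega)
  have mid : ∀ x, ((3 ≤ x ∧ x ≤ n - 2) ∨ (n + 3 ≤ x ∧ x ≤ 2 * n - 2)) → P (P x) = x := by
    intro x hx
    rcases (by omega : x % 2 = 1 ∨ x % 2 = 0) with hpar | hpar
    · have s1 : P x = x + 1 := ev x (x + 1) (x + 1)
        (by simp only [F3]; split_ifs <;> first | contradiction | omega)
        (by simp only [F1]; split_ifs <;> first | contradiction | omega)
      have s2 : P (x + 1) = x := ev (x + 1) x x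
        (by simp only [F3]; split_ifs <;> first | contradiction | omega)
        (by simp only [F1]; split_ifs <;> first | contradiction | omega)
      rw [s1, s2]
    · have s1 : P x = x - 1 := ev x (x - 1) (x - 1)
        (by simp only [F3]; split_ifs <;> first | contradiction | omega)
        (by simp only [F1]; split_ifs <;> first | contradiction | omega)
      have s2 : P (x - 1) = x := ev (x - 1) x x
        (by simp only [F3]; split_ifs <;> first | contradiction | omega)
        (by simp only [F1]; split_ifs <;> first | contradiction | omega)
      rw [s1, s2]
  have hfix : ∀ x, (x < 1 ∨ 2 * n + 1 ≤ x) → P x = x := by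
    intro x hx
    refine ev x x x ?_ ?_
    · simp only [F3]; split_ifs <;> first | contradiction | omega
    · simp only [F1]; split_ifs <;> first | contradiction | omega
  have hsq : P ^ 2 = 1 := by
    ext x
    rw [pow_two, Equiv.Perm.mul_apply, Equiv.Perm.one_apply]
    rcases (by omega : x = 1 ∨ x = 2 ∨ x = n - 1 ∨ x = 2 * n ∨ x = n ∨ x = 2 * n - 1 ∨
        x = n + 1 ∨ x = n + 2 ∨ ((3 ≤ x ∧ x ≤ n - 2) ∨ (n + 3 ≤ x ∧ x ≤ 2 * n - 2)) ∨
        (x < 1 ∨ 2 * n + 1 ≤ x)) with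
      h | h | h | h | h | h | h | h | h | h
    · subst h; rw [a1, a2]
    · subst h; rw [a2, a1]
    · subst h; rw [c1, c2]
    · subst h; rw [c2, c1]
    · subst h; rw [d1, d2]
    · subst h; rw [d2, d1]
    · subst h; rw [e1, e2]
    · subst h; rw [e2, e1]
    · exact mid x h
    · rw [hfix x h, hfix x h]
  have hne : P ≠ 1 := by
    intro h
    rw [h] at a1
    simp only [Equiv.Perm.one_apply] at a1
    omega
  exact orderOf_eq_prime hsq hne

/-! ### order of u1 * u2 -/

set_option maxHeartbeats 16000000 in
include hn hn2 in
lemma part_b : orderOf (u1 n * u2 n) = 12 := by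
  set P := u1 n * u2 n with hP
  have ev : ∀ x z y : ℕ, F2 n x = z → F1 n z = y → P x = y := by
    intro x z y h1 h2
    rw [hP, Equiv.Perm.mul_apply, hu2 n hn hn2, hu1 n hn, h1, h2]
  have p1 : P 1 = 2 := ev 1 1 2
    (by simp only [F2]; split_ifs <;> first | contradiction | omega)
    (by simp only [F1]; split_ifs <;> first | contradiction | omega)
  have p2 : P 2 = 3 := ev 2 3 3
    (by simp only [F2]; split_ifs <;> first | contradiction | omega)
    (by simp only [F1]; split_ifs <;> first | contradiction | omega)
  have p3 : P 3 = 1 := ev 3 2 1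
    (by simp only [F2]; split_ifs <;> first | contradiction | omega)
    (by simp only [F1]; split_ifs <;> first | contradiction | omega)
  have q1 : P (n + 1) = n + 2 := ev (n + 1) (n + 1) (n + 2)
    (by simp only [F2]; split_ifs <;> first | contradiction | omega)
    (by simp only [F1]; split_ifs <;> first | contradiction | omega)
  have q2 : P (n + 2) = n + 3 := ev (n + 2) (n + 3) (n + 3)
    (by simp only [F2]; split_ifs <;> first | contradiction | omega)
    (by simp only [F1]; split_ifs <;> first | contradiction | omega)
  have q3 : P (n + 3) = n + 1 := ev (n + 3) (n + 2) (n + 1)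
    (by simp only [F2]; split_ifs <;> first | contradiction | omega)
    (by simp only [F1]; split_ifs <;> first | contradiction | omega)
  have r1 : P (n - 2) = 2 * n - 1 := ev (n - 2) (n - 1) (2 * n - 1)
    (by simp only [F2]; split_ifs <;> first | contradiction | omega)
    (by simp only [F1]; split_ifs <;> first | contradiction | omega)
  have r2 : P (2 * n - 1) = 2 * n - 2 := ev (2 * n - 1) (2 * n - 2) (2 * n - 2)
    (by simp only [F2]; split_ifs <;> first | contradiction | omega)
    (by simp only [F1]; split_ifs <;> first | contradiction | omega)
  have r3 : P (2 * n - 2) = n - 1 := ev (2 * n - 2) (2 * n - 1) (n - 1)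
    (by simp only [F2]; split_ifs <;> first | contradiction | omega)
    (by simp only [F1]; split_ifs <;> first | contradiction | omega)
  have r4 : P (n - 1) = n - 2 := ev (n - 1) (n - 2) (n - 2)
    (by simp only [F2]; split_ifs <;> first | contradiction | omega)
    (by simp only [F1]; split_ifs <;> first | contradiction | omega)
  have t1 : P n = 2 * n := ev n n (2 * n)
    (by simp only [F2]; split_ifs <;> first | contradiction | omega)
    (by simp only [F1]; split_ifs <;> first | contradiction | omega)
  have t2 : P (2 * n) = n := ev (2 * n) (2 * n) n
    (by simp only [F2]; split_ifs <;> first | contradiction | omega)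
    (by simp only [F1]; split_ifs <;> first | contradiction | omega)
  have mid : ∀ x, ((4 ≤ x ∧ x ≤ n - 3) ∨ (n + 4 ≤ x ∧ x ≤ 2 * n - 3)) → P (P x) = x := by
    intro x hx
    rcases (by omega : x % 2 = 0 ∨ x % 2 = 1) with hpar | hpar
    · have s1 : P x = x + 1 := ev x (x + 1) (x + 1)
        (by simp only [F2]; split_ifs <;> first | contradiction | omega)
        (by simp only [F1]; split_ifs <;> first | contradiction | omega)
      have s2 : P (x + 1) = x := ev (x + 1) x x
        (by simp only [F2]; split_ifs <;> first | contradiction | omega)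
        (by simp only [F1]; split_ifs <;> first | contradiction | omega)
      rw [s1, s2]
    · have s1 : P x = x - 1 := ev x (x - 1) (x - 1)
        (by simp only [F2]; split_ifs <;> first | contradiction | omega)
        (by simp only [F1]; split_ifs <;> first | contradiction | omega)
      have s2 : P (x - 1) = x := ev (x - 1) x x
        (by simp only [F2]; split_ifs <;> first | contradiction | omega)
        (by simp only [F1]; split_ifs <;> first | contradiction | omega)
      rw [s1, s2]
  have hfix : ∀ x, (x < 1 ∨ 2 * n + 1 ≤ x) → P x = x := by
    intro x hx
    refine ev x x x ?_ ?_
    · simp only [F2]; split_ifs <;> first | contradiction | omega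
    · simp only [F1]; split_ifs <;> first | contradiction | omega
  have pow2 : ∀ x, P (P x) = x → (P ^ 12) x = x := by
    intro x h
    rw [show (12 : ℕ) = 2 * 6 from rfl, pow_mul]
    exact fixpow _ x (by rw [pow_two, Equiv.Perm.mul_apply, h]) 6
  have pow3 : ∀ x, P (P (P x)) = x → (P ^ 12) x = x := by
    intro x h
    rw [show (12 : ℕ) = 3 * 4 from rfl, pow_mul]
    refine fixpow _ x ?_ 4
    rw [show (3 : ℕ) = 2 + 1 from rfl, pow_succ, pow_two]
    simp only [Equiv.Perm.mul_apply]
    exact h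
  have pow4 : ∀ x, P (P (P (P x))) = x → (P ^ 12) x = x := by
    intro x h
    rw [show (12 : ℕ) = 4 * 3 from rfl, pow_mul]
    refine fixpow _ x ?_ 3
    rw [show (4 : ℕ) = 3 + 1 from rfl, pow_succ, show (3 : ℕ) = 2 + 1 from rfl, pow_succ,
      pow_two]
    simp only [Equiv.Perm.mul_apply]
    exact h
  have hP12 : P ^ 12 = 1 := by
    ext x
    rw [Equiv.Perm.one_apply]
    rcases (by omega :
        x = 1 ∨ x = 2 ∨ x = 3 ∨ x = n + 1 ∨ x = n + 2 ∨ x = n + 3 ∨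
        x = n - 2 ∨ x = 2 * n - 1 ∨ x = 2 * n - 2 ∨ x = n - 1 ∨ x = n ∨ x = 2 * n ∨
        ((4 ≤ x ∧ x ≤ n - 3) ∨ (n + 4 ≤ x ∧ x ≤ 2 * n - 3)) ∨ (x < 1 ∨ 2 * n + 1 ≤ x)) with
      h | h | h | h | h | h | h | h | h | h | h | h | h | h
    · subst h; exact pow3 _ (by rw [p1, p2, p3])
    · subst h; exact pow3 _ (by rw [p2, p3, p1])
    · subst h; exact pow3 _ (by rw [p3, p1, p2])
    · subst h; exact pow3 _ (by rw [q1, q2, q3])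
    · subst h; exact pow3 _ (by rw [q2, q3, q1])
    · subst h; exact pow3 _ (by rw [q3, q1, q2])
    · subst h; exact pow4 _ (by rw [r1, r2, r3, r4])
    · subst h; exact pow4 _ (by rw [r2, r3, r4, r1])
    · subst h; exact pow4 _ (by rw [r3, r4, r1, r2])
    · subst h; exact pow4 _ (by rw [r4, r1, r2, r3])
    · subst h; exact pow2 _ (by rw [t1, t2])
    · subst h; exact pow2 _ (by rw [t2, t1])
    · exact pow2 _ (mid x h)
    · exact fixpow _ x (hfix x h) 12
  have h6 : ¬ P ^ 6 = 1 := by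
    intro h
    have h1 : (P ^ 6) (n - 2) = n - 2 := by rw [h]; rfl
    rw [show (6 : ℕ) = 5 + 1 from rfl, pow_succ, Equiv.Perm.mul_apply, r1,
      show (5 : ℕ) = 4 + 1 from rfl, pow_succ, Equiv.Perm.mul_apply, r2,
      show (4 : ℕ) = 3 + 1 from rfl, pow_succ, Equiv.Perm.mul_apply, r3,
      show (3 : ℕ) = 2 + 1 from rfl, pow_succ, Equiv.Perm.mul_apply, r4,
      pow_two, Equiv.Perm.mul_apply, r1, r2] at h1
    omega
  have h4 : ¬ P ^ 4 = 1 := by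
    intro h
    have h1 : (P ^ 4) 1 = 1 := by rw [h]; rfl
    rw [show (4 : ℕ) = 3 + 1 from rfl, pow_succ, Equiv.Perm.mul_apply, p1,
      show (3 : ℕ) = 2 + 1 from rfl, pow_succ, Equiv.Perm.mul_apply, p2,
      pow_two, Equiv.Perm.mul_apply, p3, p1] at h1
    omega
  have hd : orderOf P ∣ 12 := orderOf_dvd_of_pow_eq_one hP12
  have h6' : ¬ orderOf P ∣ 6 := fun h => h6 (orderOf_dvd_iff_pow_eq_one.mp h)
  have h4' : ¬ orderOf P ∣ 4 := fun h => h4 (orderOf_dvd_iff_pow_eq_one.mp h)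
  have hle : orderOf P ≤ 12 := Nat.le_of_dvd (by norm_num) hd
  interval_cases h : orderOf P <;> first
    | rfl
    | (exfalso; revert hd h6' h4'; decide)

/-! ### order of u2 * u3 -/

include hn hn2 in
lemma stepL : ∀ p, p < n - 2 → (u2 n * u3 n) (eC n p) = eC n (p + 1) := by
  intro p hp
  rw [Equiv.Perm.mul_apply, hu3 n hn hn2, hu2 n hn hn2]
  simp only [eC, F2, F3]
  split_ifs <;> first | contradiction | omega

include hn hn2 in
lemma wrapL : (u2 n * u3 n) (eC n (n - 2)) = eC n 0 := by
  rw [Equiv.Perm.mul_apply, hu3 n hn hn2, hu2 n hn hn2]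
  simp only [eC, F2, F3]
  split_ifs <;> first | contradiction | omega

include hn hn2 in
lemma stepH : ∀ p, p < n - 2 → (u2 n * u3 n) (n + eC n p) = n + eC n (p + 1) := by
  intro p hp
  rw [Equiv.Perm.mul_apply, hu3 n hn hn2, hu2 n hn hn2]
  simp only [eC, F2, F3]
  split_ifs <;> first | contradiction | omega

include hn hn2 in
lemma wrapH : (u2 n * u3 n) (n + eC n (n - 2)) = n + eC n 0 := by
  rw [Equiv.Perm.mul_apply, hu3 n hn hn2, hu2 n hn hn2]
  simp only [eC, F2, F3]
  split_ifs <;> first | contradiction | omega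

include hn hn2 in
lemma stepL' : ∀ p, p < n - 1 → (u2 n * u3 n) (eC n p) = eC n ((p + 1) % (n - 1)) := by
  intro p hp
  rcases (by omega : p < n - 2 ∨ p = n - 2) with h | h
  · rw [stepL hn hn2 p h, Nat.mod_eq_of_lt (by omega)]
  · subst h
    rw [wrapL hn hn2, show (n - 2 + 1) = n - 1 by omega, Nat.mod_self]

include hn hn2 in
lemma stepH' : ∀ p, p < n - 1 → (u2 n * u3 n) (n + eC n p) = n + eC n ((p + 1) % (n - 1)) := by
  intro p hp
  rcases (by omega : p < n - 2 ∨ p = n - 2) with h | h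
  · rw [stepH hn hn2 p h, Nat.mod_eq_of_lt (by omega)]
  · subst h
    rw [wrapH hn hn2, show (n - 2 + 1) = n - 1 by omega, Nat.mod_self]

include hn hn2 in
lemma orbitL : ∀ k p, p < n - 1 →
    ((u2 n * u3 n) ^ k) (eC n p) = eC n ((p + k) % (n - 1)) := by
  intro k
  induction k with
  | zero => intro p hp; simp [Nat.mod_eq_of_lt hp]
  | succ k ih =>
    intro p hp
    rw [show p + (k + 1) = p + 1 + k from by omega, pow_succ, Equiv.Perm.mul_apply,
      stepL' hn hn2 p hp, ih _ (Nat.mod_lt _ (by omega)), Nat.mod_add_mod]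

include hn hn2 in
lemma orbitH : ∀ k p, p < n - 1 →
    ((u2 n * u3 n) ^ k) (n + eC n p) = n + eC n ((p + k) % (n - 1)) := by
  intro k
  induction k with
  | zero => intro p hp; simp [Nat.mod_eq_of_lt hp]
  | succ k ih =>
    intro p hp
    rw [show p + (k + 1) = p + 1 + k from by omega, pow_succ, Equiv.Perm.mul_apply,
      stepH' hn hn2 p hp, ih _ (Nat.mod_lt _ (by omega)), Nat.mod_add_mod]

include hn hn2 in
lemma surjL : ∀ x, 2 ≤ x → x ≤ n → ∃ p, p < n - 1 ∧ eC n p = x := by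
  intro x h1 h2
  refine ⟨if x = 2 then 0 else if x % 2 = 1 then x / 2 else n - x / 2, ?_, ?_⟩
  · split_ifs <;> omega
  · simp only [eC]; split_ifs <;> first | contradiction | omega

set_option maxHeartbeats 4000000 in
include hn hn2 in
lemma part_c : orderOf (u2 n * u3 n) = n - 1 := by
  set Q := u2 n * u3 n with hQ
  rw [orderOf_eq_iff (by omega)]
  constructor
  · ext x
    rw [Equiv.Perm.one_apply]
    rcases (by omega : (2 ≤ x ∧ x ≤ n) ∨ (n + 2 ≤ x ∧ x ≤ 2 * n) ∨
        (x < 2 ∨ x = n + 1 ∨ 2 * n + 1 ≤ x)) with h | h | h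
    · obtain ⟨p, hp, rfl⟩ := surjL hn hn2 x h.1 h.2
      rw [orbitL hn hn2 (n - 1) p hp, Nat.add_mod_right, Nat.mod_eq_of_lt hp]
    · obtain ⟨p, hp, hpe⟩ := surjL hn hn2 (x - n) (by omega) (by omega)
      have hx : x = n + eC n p := by omega
      rw [hx, orbitH hn hn2 (n - 1) p hp, Nat.add_mod_right, Nat.mod_eq_of_lt hp]
    · refine fixpow _ x ?_ _
      rw [hQ, Equiv.Perm.mul_apply, hu3 n hn hn2, hu2 n hn hn2]
      simp only [F2, F3]
      split_ifs <;> first | contradiction | omega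
  · intro m hm hm0 hc
    have h2 : (Q ^ m) 2 = 2 := by rw [hc]; rfl
    have h0 : eC n 0 = 2 := by simp [eC]
    rw [← h0, orbitL hn hn2 m 0 (by omega), Nat.zero_add, Nat.mod_eq_of_lt hm] at h2
    simp only [eC] at h2
    split_ifs at h2 <;> first | contradiction | omega

end parts

/-- For even `n ≥ 6`, `t₁t₂` has order `12`, `t₂t₃` has order `n - 1`, and
`t₁t₃` has order `2`. -/
theorem stmt10 (n : ℕ) (hn : 6 ≤ n) (he : Even n) :
    orderOf (u1 n * u2 n) = 12 ∧ orderOf (u2 n * u3 n) = n - 1 ∧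
      orderOf (u1 n * u3 n) = 2 := by
  have hn2 : n % 2 = 0 := Nat.even_iff.mp he
  exact ⟨part_b hn hn2, part_c hn hn2, part_a hn hn2⟩
end

section
/- Let n ≥ 6 be even and t₁, t₂, t₃ in Sym(2n) as above. Then ⟨t₁,t₂⟩ ∩ ⟨t₂,t₃⟩ = ⟨t₂⟩. -/
/-!
Since `t₁` and `t₂` are involutions, every element of `⟨t₁, t₂⟩` is `rᵏ` or `rᵏ t₂`, where
`r = t₁ t₂`. Every element of `⟨t₂, t₃⟩` fixes `1` and maps `{0, …, n}` onto itself. Now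
`r = (1 2 3)(n+1 n+2 n+3)(n 2n)(n-2 2n-1 2n-2 n-1)` times transpositions `(x x+1)` of the
remaining points of `[4, 2n-3]`, so `r¹² = 1`; and the 4-cycle has two consecutive points on
each side of `n`. Hence a power of `r` that fixes `1` and preserves `{0, …, n}` is a power of
`r¹²`, i.e. trivial, and the intersection is `{1, t₂}`.
-/

open Equiv Function Subgroup MulAction
open scoped Pointwise

theorem Subgroup.mem_zpowers_or_mul_mem_zpowers_of_mem_closure_pair {G : Type*} [Group G]
    {a b g : G} (ha : a * a = 1) (hb : b * b = 1) (hg : g ∈ closure {a, b}) :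
    g ∈ zpowers (a * b) ∨ g * b ∈ zpowers (a * b) := by
  have hb' : b⁻¹ = b := inv_eq_of_mul_eq_one_right hb
  have hbb (x : G) : b * (b * x) = x := by rw [← mul_assoc, hb, one_mul]
  have conj (z : G) (hz : z ∈ zpowers (a * b)) : b * z * b ∈ zpowers (a * b) := by
    obtain ⟨k, rfl⟩ := hz
    have hinv : b * (a * b) * b⁻¹ = (a * b)⁻¹ := by
      rw [hb', mul_inv_rev, inv_eq_of_mul_eq_one_right ha, hb', mul_assoc, mul_assoc, hb,
        mul_one]
    rw [show b * (a * b) ^ k * b = (b * (a * b) * b⁻¹) ^ k by rw [conj_zpow, hb'], hinv,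
      inv_zpow']
    exact zpow_mem_zpowers _ _
  induction hg using closure_induction with
  | mem x hx =>
    rcases hx with rfl | rfl
    · exact .inr (mem_zpowers _)
    · exact .inr (hb ▸ one_mem _)
  | one => exact .inl (one_mem _)
  | mul x y _ _ hx hy =>
    rcases hx with hx | hx <;> rcases hy with hy | hy
    · exact .inl (mul_mem hx hy)
    · exact .inr (by simpa only [mul_assoc] using mul_mem hx hy)
    · exact .inr (by simpa only [mul_assoc, hbb] using mul_mem hx (conj y hy))
    · exact .inl (by simpa only [mul_assoc, hbb, hb, mul_one] using mul_mem hx (conj _ hy))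
  | inv x _ hx =>
    rcases hx with hx | hx
    · exact .inl (inv_mem hx)
    · exact .inr (by simpa [mul_assoc, hbb, hb'] using conj _ (inv_mem hx))

def swapPairs (a b m : ℕ) : Perm ℕ :=
  ((List.range m).map fun k =>
    swap (a + 2 * k) (a + 2 * k + 1) * swap (b + 2 * k) (b + 2 * k + 1)).prod

theorem swapPairs_apply {a b m : ℕ} (hab : a + 2 * m ≤ b) (x : ℕ) :
    swapPairs a b m x =
      if a ≤ x ∧ x < a + 2 * m then (if (x - a) % 2 = 0 then x + 1 else x - 1)
      else if b ≤ x ∧ x < b + 2 * m then (if (x - b) % 2 = 0 then x + 1 else x - 1)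
      else x := by
  induction m generalizing x with
  | zero =>
    simp only [swapPairs, List.range_zero, List.map_nil, List.prod_nil, Perm.one_apply]
    split_ifs <;> omega
  | succ m ih =>
    rw [swapPairs, List.range_succ, List.map_append, List.prod_append, ← swapPairs]
    simp only [List.map_cons, List.map_nil, List.prod_cons, List.prod_nil, mul_one,
      Perm.mul_apply, swap_apply_def, ih (by omega : a + 2 * m ≤ b)]
    split_ifs <;> omega

theorem swapPairs_mul_self {a b m : ℕ} (hab : a + 2 * m ≤ b) :
    swapPairs a b m * swapPairs a b m = 1 := by
  ext x
  rw [Perm.mul_apply, swapPairs_apply hab, swapPairs_apply hab, Perm.one_apply]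
  split_ifs <;> omega

section Generators

variable {n : ℕ}

theorem u2_eq_swapPairs : u2 n = swapPairs 2 (n + 2) ((n - 2) / 2) := by
  simp only [u2, swapPairs]
  congr! 3 with k
  congr 2 <;> ring

theorem u3_eq_swapPairs : u3 n = swapPairs 3 (n + 3) ((n - 2) / 2) := by
  simp only [u3, swapPairs]
  congr! 3 with k
  congr 2 <;> ring

theorem u2_mul_self : u2 n * u2 n = 1 := by
  rw [u2_eq_swapPairs]
  exact swapPairs_mul_self (by omega)

theorem u2_apply (he : Even n) (x : ℕ) :
    u2 n x = if 2 ≤ x ∧ x < n ∨ n + 2 ≤ x ∧ x < 2 * n then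
      (if x % 2 = 0 then x + 1 else x - 1) else x := by
  have := Nat.even_iff.mp he
  rw [u2_eq_swapPairs, swapPairs_apply (by omega)]
  split_ifs <;> omega

theorem u3_apply (he : Even n) (x : ℕ) :
    u3 n x = if 3 ≤ x ∧ x ≤ n ∨ n + 3 ≤ x ∧ x ≤ 2 * n then
      (if x % 2 = 1 then x + 1 else x - 1) else x := by
  have := Nat.even_iff.mp he
  rw [u3_eq_swapPairs, swapPairs_apply (by omega)]
  split_ifs <;> omega

theorem u1_apply (hn : 4 ≤ n) (x : ℕ) :
    u1 n x = if x = 1 then 2 else if x = 2 then 1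
      else if x = n + 1 then n + 2 else if x = n + 2 then n + 1
      else if x = n - 1 then 2 * n - 1 else if x = 2 * n - 1 then n - 1
      else if x = n then 2 * n else if x = 2 * n then n else x := by
  simp only [u1, Perm.mul_apply]
  split_ifs <;> subst_vars <;>
    simp (disch := omega) only [swap_apply_left, swap_apply_right, swap_apply_of_ne_of_ne]

theorem u1_mul_self (hn : 4 ≤ n) : u1 n * u1 n = 1 := by
  ext x
  rw [Perm.mul_apply, Perm.one_apply, u1_apply hn x]
  split_ifs <;> subst_vars <;> simp (disch := omega) only [u1_apply hn, if_neg, if_true]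

theorem closure_u2_u3_le_stabilizer (he : Even n) :
    closure {u2 n, u3 n} ≤ stabilizer (Perm ℕ) (1 : ℕ) ⊓ stabilizer (Perm ℕ) (Set.Iic n) := by
  have := Nat.even_iff.mp he
  rw [closure_le]
  rintro g (rfl | rfl) <;>
    refine ⟨mem_stabilizer_iff.mpr ?_, mem_stabilizer_set.mpr fun x => ?_⟩ <;>
    simp only [Perm.smul_def, Set.mem_Iic, u2_apply he, u3_apply he] <;> split_ifs <;> omega

def rot (n : ℕ) : Perm ℕ := u1 n * u2 n

theorem rot_apply (x : ℕ) : rot n x = u1 n (u2 n x) := rfl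

theorem rot_apply_low_three_cycle (hn : 6 ≤ n) (he : Even n) :
    rot n 1 = 2 ∧ rot n 2 = 3 ∧ rot n 3 = 1 := by
  have := Nat.even_iff.mp he
  have h4 : 4 ≤ n := by omega
  refine ⟨?_, ?_, ?_⟩ <;>
  simp (disch := omega) only [rot_apply, u2_apply he, u1_apply h4, if_pos, if_neg, if_true]

theorem rot_apply_high_three_cycle (hn : 6 ≤ n) (he : Even n) :
    rot n (n + 1) = n + 2 ∧ rot n (n + 2) = n + 3 ∧ rot n (n + 3) = n + 1 := by
  have := Nat.even_iff.mp he
  have h4 : 4 ≤ n := by omega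
  refine ⟨?_, ?_, ?_⟩ <;>
  simp (disch := omega) only [rot_apply, u2_apply he, u1_apply h4, if_pos, if_neg, if_true]

theorem rot_apply_transposition (hn : 6 ≤ n) (he : Even n) :
    rot n n = 2 * n ∧ rot n (2 * n) = n := by
  have := Nat.even_iff.mp he
  have h4 : 4 ≤ n := by omega
  refine ⟨?_, ?_⟩ <;>
  simp (disch := omega) only [rot_apply, u2_apply he, u1_apply h4, if_pos, if_neg, if_true]

theorem rot_apply_four_cycle (hn : 6 ≤ n) (he : Even n) :
    rot n (n - 2) = 2 * n - 1 ∧ rot n (2 * n - 1) = 2 * n - 2 ∧ rot n (2 * n - 2) = n - 1 ∧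
      rot n (n - 1) = n - 2 := by
  have := Nat.even_iff.mp he
  have h4 : 4 ≤ n := by omega
  refine ⟨?_, ?_, ?_, ?_⟩ <;>
  simp (disch := omega) only [rot_apply, u2_apply he, u1_apply h4, if_pos, if_neg] <;> omega

theorem rot_rot_apply_of_not_mem_cycles (hn : 6 ≤ n) (he : Even n) {x : ℕ}
    (hx : 4 ≤ x ∧ x + 3 ≤ n ∨ n + 4 ≤ x ∧ x + 3 ≤ 2 * n ∨ x = 0 ∨ 2 * n < x) :
    rot n (rot n x) = x := by
  have := Nat.even_iff.mp he
  have h4 : 4 ≤ n := by omega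
  rcases Nat.even_or_odd' x with ⟨c, rfl | rfl⟩ <;> rcases hx with h | h | h | h <;>
  simp (disch := omega) only [rot_apply, u2_apply he, u1_apply h4, if_pos, if_neg] <;> omega

theorem rot_pow_twelve (hn : 6 ≤ n) (he : Even n) : rot n ^ 12 = 1 := by
  obtain ⟨a₁, a₂, a₃⟩ := rot_apply_low_three_cycle hn he
  obtain ⟨b₁, b₂, b₃⟩ := rot_apply_high_three_cycle hn he
  obtain ⟨c₁, c₂⟩ := rot_apply_transposition hn he
  obtain ⟨d₁, d₂, d₃, d₄⟩ := rot_apply_four_cycle hn he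
  ext x
  rw [Perm.one_apply, Perm.coe_pow]
  by_cases hx : 4 ≤ x ∧ x + 3 ≤ n ∨ n + 4 ≤ x ∧ x + 3 ≤ 2 * n ∨ x = 0 ∨ 2 * n < x
  · exact IsPeriodicPt.mul_const (m := 2) (rot_rot_apply_of_not_mem_cycles hn he hx) 6
  obtain rfl | rfl | rfl | rfl | rfl | rfl | rfl | rfl | rfl | rfl | rfl | rfl :
      x = 1 ∨ x = 2 ∨ x = 3 ∨ x = n + 1 ∨ x = n + 2 ∨ x = n + 3 ∨ x = n ∨ x = 2 * n ∨
        x = n - 2 ∨ x = 2 * n - 1 ∨ x = 2 * n - 2 ∨ x = n - 1 := by omega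
  all_goals simp only [iterate_succ_apply', iterate_zero_apply, a₁, a₂, a₃, b₁, b₂, b₃, c₁, c₂,
    d₁, d₂, d₃, d₄]

theorem eq_one_of_mem_zpowers_rot_of_mem_stabilizer (hn : 6 ≤ n) (he : Even n) {g : Perm ℕ}
    (hg : g ∈ zpowers (rot n))
    (hs : g ∈ stabilizer (Perm ℕ) (1 : ℕ) ⊓ stabilizer (Perm ℕ) (Set.Iic n)) : g = 1 := by
  have hfin : IsOfFinOrder (rot n) :=
    isOfFinOrder_iff_pow_eq_one.mpr ⟨12, by norm_num, rot_pow_twelve hn he⟩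
  obtain ⟨k, rfl⟩ := (Submonoid.mem_powers_iff _ _).mp (hfin.mem_powers_iff_mem_zpowers.mpr hg)
  obtain ⟨h₁, hI⟩ := mem_inf.mp hs
  obtain ⟨a₁, a₂, a₃⟩ := rot_apply_low_three_cycle hn he
  obtain ⟨d₁, d₂, d₃, d₄⟩ := rot_apply_four_cycle hn he
  have hlo := (mem_stabilizer_set.mp hI (n - 2)).mpr (by simp)
  have hhi := mt (mem_stabilizer_set.mp hI (2 * n - 1)).mp (by simp; omega)
  rw [mem_stabilizer_iff, Perm.smul_def, Perm.coe_pow] at h₁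
  simp only [Perm.smul_def, Perm.coe_pow, Set.mem_Iic] at hlo hhi
  have h₃ : 3 ∣ k := by
    have p : IsPeriodicPt (rot n) 3 1 := by
      simp only [IsPeriodicPt, IsFixedPt, iterate_succ_apply', iterate_zero_apply, a₁, a₂, a₃]
    rw [← minimalPeriod_eq_prime p (by simp [IsFixedPt, a₁])]
    exact IsPeriodicPt.minimalPeriod_dvd h₁
  -- `r`, `r²`, `r³` move `n - 2` above `n` or `2n - 1` below it
  have h₄ : k % 4 = 0 := by
    have p : IsPeriodicPt (rot n) 4 (n - 2) := by
      simp only [IsPeriodicPt, IsFixedPt, iterate_succ_apply', iterate_zero_apply, d₁, d₂, d₃, d₄]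
    have p' : IsPeriodicPt (rot n) 4 (2 * n - 1) := d₁ ▸ p.apply
    rw [← p.iterate_mod_apply] at hlo
    rw [← p'.iterate_mod_apply] at hhi
    have := Nat.mod_lt k (show 0 < 4 by norm_num)
    interval_cases h : k % 4 <;>
      simp only [iterate_succ_apply', iterate_zero_apply, d₁, d₂, d₃, d₄] at hlo hhi <;> omega
  obtain ⟨j, rfl⟩ : 12 ∣ k := by omega
  rw [pow_mul, rot_pow_twelve hn he, one_pow]

end Generators

/-- For even `n ≥ 6`, `⟨t₁,t₂⟩ ⊓ ⟨t₂,t₃⟩ = ⟨t₂⟩`. -/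
theorem stmt12 (n : ℕ) (hn : 6 ≤ n) (he : Even n) :
    Subgroup.closure {u1 n, u2 n} ⊓ Subgroup.closure {u2 n, u3 n}
      = Subgroup.closure {u2 n} := by
  have hK := closure_u2_u3_le_stabilizer he
  have hu₂ : u2 n ∈ closure {u2 n, u3 n} := subset_closure (by simp)
  refine le_antisymm (fun g ⟨hgH, hgK⟩ => ?_)
    (le_inf (closure_mono (by simp)) (closure_mono (by simp)))
  rcases mem_zpowers_or_mul_mem_zpowers_of_mem_closure_pair (u1_mul_self (by omega))
    u2_mul_self hgH with h | h
  · rw [eq_one_of_mem_zpowers_rot_of_mem_stabilizer hn he h (hK hgK)]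
    exact one_mem _
  · have hg := eq_one_of_mem_zpowers_rot_of_mem_stabilizer hn he h (hK (mul_mem hgK hu₂))
    rw [eq_inv_of_mul_eq_one_left hg, inv_eq_of_mul_eq_one_right u2_mul_self]
    exact mem_closure_singleton_self _
end

section
/- Let n ≥ 6 be even and t₁, t₂, t₃ in Sym(2n) as above. Then ⟨t₁,t₂,t₃⟩ is isomorphic to the Coxeter group D_n, i.e., it equals the subgroup ⟨β₀,…,β_{n−1}⟩ of Sym(2n) in the standard embedding. -/
/-!
Write `dswap n a b = (a b)(n+a n+b)` and `dflip n a b = (a n+a)(b n+b)`. Then `β₀ = dflip n 1 2`,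
`βᵢ = dswap n i (i+1)` for `i ≥ 1`, `t₁ = dswap n 1 2 * dflip n (n-1) n`, and `t₂`, `t₃` are
products of `βᵢ`'s, so `⟨t₁, t₂, t₃⟩ ≤ Dₙ`. All these permutations move the pairs `{a, n+a}` as
blocks, and conjugating a `dswap` or `dflip` by one of them just relabels its indices.

Conversely, `t₁ * (t₂ t₁ t₂⁻¹)` is the commuting product of the element
`dswap n 1 2 * dswap n 1 3` of order 3 with the involution `dflip n (n-2) (n-1)`, so its cube is
that involution. On the indices `2, …, n`, `t₂` and `t₃` swap alternate neighbours; conjugating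
by them yields every `dflip n a (a+4)`, then `t₁` turns `dflip n 2 6` into `dflip n 1 6`, and
sliding again gives every `dflip n 1 y`. Hence `dflip n (n-1) n`, so `β₁ = t₁ * dflip n (n-1) n`,
and then every `dswap n 1 b` and every `βᵢ` lie in `⟨t₁, t₂, t₃⟩`.
-/

open Equiv Equiv.Perm

theorem commute_swap_swap_of_ne {α : Type*} [DecidableEq α] {a b c d : α}
    (hac : a ≠ c) (had : a ≠ d) (hbc : b ≠ c) (hbd : b ≠ d) :
    Commute (swap a b) (swap c d) :=
  Disjoint.commute fun x => by
    by_cases hx : x = a ∨ x = b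
    · right
      rcases hx with rfl | rfl <;> exact swap_apply_of_ne_of_ne ‹_› ‹_›
    · rw [not_or] at hx
      exact Or.inl (swap_apply_of_ne_of_ne hx.1 hx.2)

theorem prod_map_range_apply_of_forall {α : Type*} {φ : ℕ → Perm α} {m : ℕ} {x : α}
    (hx : ∀ j < m, φ j x = x) : ((List.range m).map φ).prod x = x := by
  induction m with
  | zero => rfl
  | succ m ih =>
    rw [List.range_succ, List.map_append, List.prod_append, List.map_singleton,
      List.prod_singleton, mul_apply, hx m m.lt_succ_self, ih fun j hj => hx j (by omega)]

theorem prod_map_range_apply {α : Type*} {φ : ℕ → Perm α} {m k : ℕ} {x y : α} (hk : k < m)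
    (hxy : φ k x = y) (hx : ∀ j < m, j ≠ k → φ j x = x) (hy : ∀ j < m, j ≠ k → φ j y = y) :
    ((List.range m).map φ).prod x = y := by
  induction m with
  | zero => omega
  | succ m ih =>
    rw [List.range_succ, List.map_append, List.prod_append, List.map_singleton,
      List.prod_singleton, mul_apply]
    rcases Nat.lt_succ_iff_lt_or_eq.1 hk with hk | rfl
    · rw [hx m m.lt_succ_self (by omega)]
      exact ih hk (fun j hj => hx j (by omega)) (fun j hj => hy j (by omega))
    · rw [hxy]
      exact prod_map_range_apply_of_forall fun j hj => hy j (by omega) (by omega)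

theorem forall_of_iff_succ {P : ℕ → Prop} {lo hi k : ℕ}
    (hP : ∀ y, lo ≤ y → y < hi → (P y ↔ P (y + 1))) (hk : k ∈ Set.Icc lo hi) (hPk : P k)
    {y : ℕ} (hy : y ∈ Set.Icc lo hi) : P y := by
  have key : ∀ y ∈ Set.Icc lo hi, P y ↔ P lo := by
    rintro y ⟨hy, hyhi⟩
    induction y, hy using Nat.le_induction with
    | base => exact Iff.rfl
    | succ y hy ih => exact (hP y hy (by omega)).symm.trans (ih (by omega))
  exact (key y hy).2 ((key k hk).1 hPk)

theorem pow_three_eq_one_of_conj {G : Type*} [Group G] {s t : G} (hs : s * s = 1)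
    (ht : t * t = 1) (hst : s * t * s⁻¹ = t * s * t⁻¹) : (s * t) ^ 3 = 1 := by
  rw [inv_eq_of_mul_eq_one_right hs, inv_eq_of_mul_eq_one_right ht] at hst
  calc (s * t) ^ 3 = (s * t * s) * (t * s * t) := by
        simp only [pow_succ, pow_zero, one_mul, mul_assoc]
    _ = (t * s) * (t * t) * (s * t) := by rw [hst]; group
    _ = 1 := by rw [ht, mul_one, ← mul_assoc, mul_assoc t, hs, mul_one, ht]

theorem mul_pow_three_of_commute {G : Type*} [Group G] {x y : G} (hxy : Commute x y)
    (hx : x ^ 3 = 1) (hy : y * y = 1) : (x * y) ^ 3 = y := by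
  rw [hxy.mul_pow, hx, one_mul, pow_succ, sq, hy, one_mul]

def dswap (n a b : ℕ) : Perm ℕ := swap a b * swap (n + a) (n + b)

def dflip (n a b : ℕ) : Perm ℕ := swap a (n + a) * swap b (n + b)

def SendsFlip (n : ℕ) (w : Perm ℕ) (a b : ℕ) : Prop := w a = b ∧ w (n + a) = n + b

section Relabel

variable {n a b c d a' b' : ℕ} {w : Perm ℕ}

theorem dswap_comm : dswap n a b = dswap n b a := by
  rw [dswap, dswap, swap_comm a, swap_comm (n + a)]

theorem dswap_mul_self (ha : a ∈ Set.Icc 1 n) (hb : b ∈ Set.Icc 1 n) :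
    dswap n a b * dswap n a b = 1 := by
  obtain ⟨ha₁, ha₂⟩ := ha
  obtain ⟨hb₁, hb₂⟩ := hb
  have hcomm : Commute (swap (n + a) (n + b)) (swap a b) :=
    commute_swap_swap_of_ne (by omega) (by omega) (by omega) (by omega)
  rw [dswap, mul_assoc, ← mul_assoc (swap (n + a) _), hcomm.eq, mul_assoc, swap_mul_self,
    mul_one, swap_mul_self]

theorem commute_swap_add (ha : a ∈ Set.Icc 1 n) (hb : b ∈ Set.Icc 1 n) :
    Commute (swap a (n + a)) (swap b (n + b)) := by
  obtain ⟨ha₁, ha₂⟩ := ha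
  obtain ⟨hb₁, hb₂⟩ := hb
  rcases eq_or_ne a b with rfl | hab
  · exact Commute.refl _
  exact commute_swap_swap_of_ne hab (by omega) (by omega) (by omega)

theorem commute_dflip_dflip (ha : a ∈ Set.Icc 1 n) (hb : b ∈ Set.Icc 1 n)
    (hc : c ∈ Set.Icc 1 n) (hd : d ∈ Set.Icc 1 n) : Commute (dflip n a b) (dflip n c d) :=
  .mul_left (.mul_right (commute_swap_add ha hc) (commute_swap_add ha hd))
    (.mul_right (commute_swap_add hb hc) (commute_swap_add hb hd))

theorem dflip_comm (ha : a ∈ Set.Icc 1 n) (hb : b ∈ Set.Icc 1 n) :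
    dflip n a b = dflip n b a :=
  (commute_swap_add ha hb).eq

theorem dflip_mul_dflip (ha : a ∈ Set.Icc 1 n) (hb : b ∈ Set.Icc 1 n) :
    dflip n a b * dflip n a c = dflip n b c := by
  rw [dflip_comm ha hb, dflip, dflip, dflip, mul_assoc, ← mul_assoc (swap a _), swap_mul_self,
    one_mul]

theorem dflip_mul_self (ha : a ∈ Set.Icc 1 n) (hb : b ∈ Set.Icc 1 n) :
    dflip n a b * dflip n a b = 1 := by
  rw [dflip_mul_dflip ha hb, dflip, swap_mul_self]

theorem conj_dswap (ha : SendsFlip n w a a') (hb : SendsFlip n w b b') :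
    w * dswap n a b * w⁻¹ = dswap n a' b' := by
  obtain ⟨rfl, ha⟩ := ha
  obtain ⟨rfl, hb⟩ := hb
  rw [dswap, dswap, ← ha, ← hb, swap_apply_apply, swap_apply_apply]
  group

theorem conj_dflip (ha : SendsFlip n w a a') (hb : SendsFlip n w b b') :
    w * dflip n a b * w⁻¹ = dflip n a' b' := by
  obtain ⟨rfl, ha⟩ := ha
  obtain ⟨rfl, hb⟩ := hb
  rw [dflip, dflip, ← ha, ← hb, swap_apply_apply, swap_apply_apply]
  group

theorem dswap_mem_iff {H : Subgroup (Perm ℕ)} (hw : w ∈ H) (ha : SendsFlip n w a a')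
    (hb : SendsFlip n w b b') : dswap n a' b' ∈ H ↔ dswap n a b ∈ H := by
  rw [← conj_dswap ha hb, H.mul_mem_cancel_right (inv_mem hw), H.mul_mem_cancel_left hw]

theorem dflip_mem_iff {H : Subgroup (Perm ℕ)} (hw : w ∈ H) (ha : SendsFlip n w a a')
    (hb : SendsFlip n w b b') : dflip n a' b' ∈ H ↔ dflip n a b ∈ H := by
  rw [← conj_dflip ha hb, H.mul_mem_cancel_right (inv_mem hw), H.mul_mem_cancel_left hw]

theorem commute_dswap_of_sendsFlip (ha : SendsFlip n w a a) (hb : SendsFlip n w b b) :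
    Commute w (dswap n a b) :=
  mul_inv_eq_iff_eq_mul.1 (conj_dswap ha hb)

theorem commute_dflip_of_sendsFlip (ha : SendsFlip n w a a) (hb : SendsFlip n w b b) :
    Commute w (dflip n a b) :=
  mul_inv_eq_iff_eq_mul.1 (conj_dflip ha hb)

theorem sendsFlip_dswap_left (ha : a ∈ Set.Icc 1 n) (hb : b ∈ Set.Icc 1 n) :
    SendsFlip n (dswap n a b) a b := by
  obtain ⟨ha₁, ha₂⟩ := ha
  obtain ⟨hb₁, hb₂⟩ := hb
  simp only [SendsFlip, dswap, mul_apply, swap_apply_def]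
  split_ifs <;> omega

theorem sendsFlip_dswap_of_ne (ha : a ∈ Set.Icc 1 n) (hb : b ∈ Set.Icc 1 n)
    (hc : c ∈ Set.Icc 1 n) (hca : c ≠ a) (hcb : c ≠ b) : SendsFlip n (dswap n a b) c c := by
  obtain ⟨ha₁, ha₂⟩ := ha
  obtain ⟨hb₁, hb₂⟩ := hb
  obtain ⟨hc₁, hc₂⟩ := hc
  simp only [SendsFlip, dswap, mul_apply, swap_apply_def]
  split_ifs <;> omega

theorem sendsFlip_dflip_of_ne (ha : a ∈ Set.Icc 1 n) (hb : b ∈ Set.Icc 1 n)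
    (hc : c ∈ Set.Icc 1 n) (hca : c ≠ a) (hcb : c ≠ b) : SendsFlip n (dflip n a b) c c := by
  obtain ⟨ha₁, ha₂⟩ := ha
  obtain ⟨hb₁, hb₂⟩ := hb
  obtain ⟨hc₁, hc₂⟩ := hc
  simp only [SendsFlip, dflip, mul_apply, swap_apply_def]
  split_ifs <;> omega

theorem dswap_mul_dswap_pow_three (ha : a ∈ Set.Icc 1 n) (hb : b ∈ Set.Icc 1 n)
    (hc : c ∈ Set.Icc 1 n) (hab : a ≠ b) (hac : a ≠ c) (hbc : b ≠ c) :
    (dswap n a b * dswap n a c) ^ 3 = 1 :=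
  pow_three_eq_one_of_conj (dswap_mul_self ha hb) (dswap_mul_self ha hc) <| by
    rw [conj_dswap (sendsFlip_dswap_left ha hb) (sendsFlip_dswap_of_ne ha hb hc hac.symm hbc.symm),
      conj_dswap (sendsFlip_dswap_left ha hc) (sendsFlip_dswap_of_ne ha hc hb hab.symm hbc),
      dswap_comm]

end Relabel

def dswapChain (n s m : ℕ) : Perm ℕ :=
  ((List.range m).map fun k => dswap n (2 * k + s) (2 * k + s + 1)).prod

section Chain

variable {n s m k a b c : ℕ}

theorem sendsFlip_dswapChain_left (hs : 1 ≤ s) (hsm : 2 * m + s ≤ n + 1) (hk : k < m) :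
    SendsFlip n (dswapChain n s m) (2 * k + s) (2 * k + s + 1) := by
  constructor <;> refine prod_map_range_apply hk ?_ ?_ ?_ <;> (try intro j hj hjk) <;>
    simp only [dswap, mul_apply, swap_apply_def] <;> split_ifs <;> omega

theorem sendsFlip_dswapChain_right (hs : 1 ≤ s) (hsm : 2 * m + s ≤ n + 1) (hk : k < m) :
    SendsFlip n (dswapChain n s m) (2 * k + s + 1) (2 * k + s) := by
  constructor <;> refine prod_map_range_apply hk ?_ ?_ ?_ <;> (try intro j hj hjk) <;>
    simp only [dswap, mul_apply, swap_apply_def] <;> split_ifs <;> omega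

theorem sendsFlip_dswapChain_of_not_mem (hs : 1 ≤ s) (hsm : 2 * m + s ≤ n + 1)
    (ha : a ∈ Set.Icc 1 n) (has : a < s ∨ 2 * m + s ≤ a) :
    SendsFlip n (dswapChain n s m) a a := by
  obtain ⟨ha₁, ha₂⟩ := ha
  constructor <;> refine prod_map_range_apply_of_forall fun j hj => ?_ <;>
    simp only [dswap, mul_apply, swap_apply_def] <;> split_ifs <;> omega

theorem u1_eq_dswap_mul_dflip (hn : 1 ≤ n) : u1 n = dswap n 1 2 * dflip n (n - 1) n := by
  rw [u1, dswap, dflip, show 2 * n - 1 = n + (n - 1) by omega, show 2 * n = n + n by omega,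
    mul_assoc]

theorem u2_eq_dswapChain : u2 n = dswapChain n 2 ((n - 2) / 2) := rfl

theorem u3_eq_dswapChain : u3 n = dswapChain n 3 ((n - 2) / 2) := rfl

theorem sendsFlip_u2 (he : Even n) (hb : 2 ≤ b) (hbn : b + 2 ≤ n) (hbe : b % 2 = 0)
    (hc : c = b + 1) : SendsFlip n (u2 n) b c ∧ SendsFlip n (u2 n) c b := by
  obtain ⟨k, rfl⟩ : ∃ k, b = 2 * k + 2 := ⟨b / 2 - 1, by omega⟩
  subst hc
  obtain ⟨r, rfl⟩ := he
  rw [u2_eq_dswapChain]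
  exact ⟨sendsFlip_dswapChain_left (by omega) (by omega) (by omega),
    sendsFlip_dswapChain_right (by omega) (by omega) (by omega)⟩

theorem sendsFlip_u3 (he : Even n) (hb : 3 ≤ b) (hbn : b + 1 ≤ n) (hbo : b % 2 = 1)
    (hc : c = b + 1) : SendsFlip n (u3 n) b c ∧ SendsFlip n (u3 n) c b := by
  obtain ⟨k, rfl⟩ : ∃ k, b = 2 * k + 3 := ⟨b / 2 - 1, by omega⟩
  subst hc
  obtain ⟨r, rfl⟩ := he
  rw [u3_eq_dswapChain]
  exact ⟨sendsFlip_dswapChain_left (by omega) (by omega) (by omega),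
    sendsFlip_dswapChain_right (by omega) (by omega) (by omega)⟩

theorem sendsFlip_u2_self (he : Even n) (ha : a ∈ Set.Icc 1 n) (ha' : a = 1 ∨ a = n) :
    SendsFlip n (u2 n) a a := by
  obtain ⟨r, rfl⟩ := he
  rw [u2_eq_dswapChain]
  refine sendsFlip_dswapChain_of_not_mem (by norm_num) ?_ ha ?_ <;>
    (obtain ⟨_, _⟩ := ha; omega)

theorem sendsFlip_u3_one (hn : 2 ≤ n) (he : Even n) : SendsFlip n (u3 n) 1 1 := by
  obtain ⟨r, rfl⟩ := he
  rw [u3_eq_dswapChain]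
  exact sendsFlip_dswapChain_of_not_mem (by norm_num) (by omega) ⟨le_rfl, by omega⟩ (by omega)

end Chain

def tGroup (n : ℕ) : Subgroup (Perm ℕ) := Subgroup.closure {u1 n, u2 n, u3 n}

section TGroup

variable {n a b i y : ℕ}

theorem u1_mem_tGroup : u1 n ∈ tGroup n := Subgroup.subset_closure (by simp)

theorem u2_mem_tGroup : u2 n ∈ tGroup n := Subgroup.subset_closure (by simp)

theorem u3_mem_tGroup : u3 n ∈ tGroup n := Subgroup.subset_closure (by simp)

theorem exists_mem_tGroup_sendsFlip (hn : 2 ≤ n) (he : Even n) (a : ℕ) :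
    ∃ w ∈ tGroup n, SendsFlip n w 1 1 ∧ ∀ b, 2 ≤ b → b + 1 ≤ n → b % 2 = a % 2 →
      SendsFlip n w b (b + 1) ∧ SendsFlip n w (b + 1) b := by
  have hn' : n % 2 = 0 := Nat.even_iff.1 he
  rcases Nat.mod_two_eq_zero_or_one a with h | h
  · exact ⟨u2 n, u2_mem_tGroup, sendsFlip_u2_self he ⟨le_rfl, by omega⟩ (.inl rfl),
      fun b hb hbn hba => sendsFlip_u2 he hb (by omega) (by omega) rfl⟩
  · exact ⟨u3 n, u3_mem_tGroup, sendsFlip_u3_one hn he,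
      fun b hb hbn hba => sendsFlip_u3 he (by omega) hbn (by omega) rfl⟩

theorem u1_mul_conj_u2_u1 (hn : 6 ≤ n) (he : Even n) :
    u1 n * (u2 n * u1 n * (u2 n)⁻¹) = (dswap n 1 2 * dswap n 1 3) * dflip n (n - 2) (n - 1) := by
  have hn' : n % 2 = 0 := Nat.even_iff.1 he
  have h1 := sendsFlip_u2_self he ⟨le_rfl, by omega⟩ (.inl rfl)
  have h2 := (sendsFlip_u2 he le_rfl (by omega) rfl (c := 3) rfl).1
  have h3 := (sendsFlip_u2 he (b := n - 2) (c := n - 1) (by omega) (by omega) (by omega)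
    (by omega)).2
  have h4 := sendsFlip_u2_self he ⟨by omega, le_rfl⟩ (.inr rfl)
  have hconj : u2 n * u1 n * (u2 n)⁻¹ = dswap n 1 3 * dflip n (n - 2) n := by
    rw [u1_eq_dswap_mul_dflip (by omega), ← conj_dswap h1 h2, ← conj_dflip h3 h4]
    group
  have hF : Commute (dflip n (n - 1) n) (dswap n 1 3) :=
    commute_dswap_of_sendsFlip
      (sendsFlip_dflip_of_ne ⟨by omega, by omega⟩ ⟨by omega, le_rfl⟩ ⟨le_rfl, by omega⟩
        (by omega) (by omega))
      (sendsFlip_dflip_of_ne ⟨by omega, by omega⟩ ⟨by omega, le_rfl⟩ ⟨by omega, by omega⟩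
        (by omega) (by omega))
  have hFF : dflip n (n - 1) n * dflip n (n - 2) n = dflip n (n - 2) (n - 1) := by
    rw [dflip_comm (a := n - 1) ⟨by omega, by omega⟩ ⟨by omega, le_rfl⟩,
      dflip_comm (a := n - 2) ⟨by omega, by omega⟩ ⟨by omega, le_rfl⟩,
      dflip_mul_dflip ⟨by omega, le_rfl⟩ ⟨by omega, by omega⟩,
      dflip_comm ⟨by omega, by omega⟩ ⟨by omega, by omega⟩]
  rw [hconj, u1_eq_dswap_mul_dflip (by omega), ← hFF, mul_assoc, ← mul_assoc (dflip n _ _), hF.eq]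
  group

theorem dflip_sub_two_sub_one_mem_tGroup (hn : 6 ≤ n) (he : Even n) :
    dflip n (n - 2) (n - 1) ∈ tGroup n := by
  have hY : Commute (dswap n 1 2 * dswap n 1 3) (dflip n (n - 2) (n - 1)) := by
    refine Commute.mul_left ?_ ?_ <;> refine commute_dflip_of_sendsFlip ?_ ?_ <;>
      exact sendsFlip_dswap_of_ne ⟨le_rfl, by omega⟩ ⟨by omega, by omega⟩ ⟨by omega, by omega⟩
        (by omega) (by omega)
  rw [← mul_pow_three_of_commute hY
    (dswap_mul_dswap_pow_three ⟨le_rfl, by omega⟩ ⟨by omega, by omega⟩ ⟨by omega, by omega⟩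
      (by omega) (by omega) (by omega))
    (dflip_mul_self ⟨by omega, by omega⟩ ⟨by omega, by omega⟩), ← u1_mul_conj_u2_u1 hn he]
  exact pow_mem (mul_mem u1_mem_tGroup
    (mul_mem (mul_mem u2_mem_tGroup u1_mem_tGroup) (inv_mem u2_mem_tGroup))) 3

theorem dflip_sub_four_mem_tGroup (hn : 6 ≤ n) (he : Even n) :
    dflip n (n - 4) n ∈ tGroup n := by
  have hn' : n % 2 = 0 := Nat.even_iff.1 he
  have h3 := sendsFlip_u3 he (b := n - 3) (c := n - 2) (by omega) (by omega) (by omega)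
    (by omega)
  have h3' := sendsFlip_u3 he (b := n - 1) (c := n) (by omega) (by omega) (by omega) (by omega)
  have h2 := sendsFlip_u2 he (b := n - 4) (c := n - 3) (by omega) (by omega) (by omega)
    (by omega)
  rw [← dflip_mem_iff u2_mem_tGroup h2.1 (sendsFlip_u2_self he ⟨by omega, le_rfl⟩ (.inr rfl)),
    ← dflip_mem_iff u3_mem_tGroup h3.1 h3'.2]
  exact dflip_sub_two_sub_one_mem_tGroup hn he

theorem dflip_add_four_mem_tGroup (hn : 6 ≤ n) (he : Even n) (ha : a ∈ Set.Icc 2 (n - 4)) :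
    dflip n a (a + 4) ∈ tGroup n := by
  refine forall_of_iff_succ (P := fun a => dflip n a (a + 4) ∈ tGroup n) (fun a ha han => ?_)
    (k := n - 4) ⟨by omega, le_rfl⟩ ?_ ha
  · obtain ⟨w, hw, -, hb⟩ := exists_mem_tGroup_sendsFlip (by omega) he a
    exact (dflip_mem_iff hw (hb a ha (by omega) rfl).1
      (hb (a + 4) (by omega) (by omega) (by omega)).1).symm
  · rw [Nat.sub_add_cancel (by omega)]
    exact dflip_sub_four_mem_tGroup hn he

theorem dflip_one_mem_tGroup (hn : 6 ≤ n) (he : Even n) (hy : y ∈ Set.Icc 2 n) :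
    dflip n 1 y ∈ tGroup n := by
  refine forall_of_iff_succ (P := fun y => dflip n 1 y ∈ tGroup n) (fun y hy hyn => ?_)
    (k := 6) ⟨by omega, hn⟩ ?_ hy
  · obtain ⟨w, hw, h1, hb⟩ := exists_mem_tGroup_sendsFlip (by omega) he y
    exact (dflip_mem_iff hw h1 (hb y hy hyn rfl).1).symm
  -- `SendsFlip` fails for `t₁` at the index `6` when `n = 6`, so commute past its flip part.
  have hF : Commute (dflip n (n - 1) n) (dflip n 2 6) :=
    commute_dflip_dflip ⟨by omega, by omega⟩ ⟨by omega, le_rfl⟩ ⟨by omega, by omega⟩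
      ⟨by omega, hn⟩
  have hconj : u1 n * dflip n 2 6 * (u1 n)⁻¹ = dflip n 1 6 :=
    calc u1 n * dflip n 2 6 * (u1 n)⁻¹
        = dswap n 2 1 * (dflip n (n - 1) n * dflip n 2 6 * (dflip n (n - 1) n)⁻¹) *
            (dswap n 2 1)⁻¹ := by
          rw [u1_eq_dswap_mul_dflip (by omega), dswap_comm]
          group
      _ = dflip n 1 6 := by
          rw [hF.mul_inv_cancel]
          exact conj_dflip (sendsFlip_dswap_left ⟨by omega, by omega⟩ ⟨le_rfl, by omega⟩)
            (sendsFlip_dswap_of_ne ⟨by omega, by omega⟩ ⟨le_rfl, by omega⟩ ⟨by omega, hn⟩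
              (by omega) (by omega))
  rw [← hconj]
  exact mul_mem (mul_mem u1_mem_tGroup (dflip_add_four_mem_tGroup hn he ⟨le_rfl, by omega⟩))
    (inv_mem u1_mem_tGroup)

theorem dswap_one_two_mem_tGroup (hn : 6 ≤ n) (he : Even n) : dswap n 1 2 ∈ tGroup n := by
  have hF : dflip n (n - 1) n ∈ tGroup n := by
    rw [← dflip_mul_dflip (a := 1) ⟨le_rfl, by omega⟩ ⟨by omega, by omega⟩]
    exact mul_mem (dflip_one_mem_tGroup hn he ⟨by omega, by omega⟩)
      (dflip_one_mem_tGroup hn he ⟨by omega, le_rfl⟩)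
  rw [← Subgroup.mul_mem_cancel_right _ hF, ← u1_eq_dswap_mul_dflip (by omega)]
  exact u1_mem_tGroup

theorem dswap_one_mem_tGroup (hn : 6 ≤ n) (he : Even n) (hb : b ∈ Set.Icc 2 n) :
    dswap n 1 b ∈ tGroup n := by
  refine forall_of_iff_succ (P := fun b => dswap n 1 b ∈ tGroup n) (fun b hb hbn => ?_)
    (k := 2) ⟨le_rfl, by omega⟩ (dswap_one_two_mem_tGroup hn he) hb
  obtain ⟨w, hw, h1, hw'⟩ := exists_mem_tGroup_sendsFlip (by omega) he b
  exact (dswap_mem_iff hw h1 (hw' b hb hbn rfl).1).symm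

theorem dswap_succ_mem_tGroup (hn : 6 ≤ n) (he : Even n) (hi : i ∈ Set.Icc 1 (n - 1)) :
    dswap n i (i + 1) ∈ tGroup n := by
  obtain ⟨hi₁, hi₂⟩ := hi
  rcases eq_or_lt_of_le hi₁ with rfl | hi₁
  · exact dswap_one_two_mem_tGroup hn he
  rw [dswap_mem_iff (dswap_one_mem_tGroup hn he ⟨hi₁, by omega⟩)
    (sendsFlip_dswap_left ⟨le_rfl, by omega⟩ ⟨by omega, by omega⟩)
    (sendsFlip_dswap_of_ne ⟨le_rfl, by omega⟩ ⟨by omega, by omega⟩ ⟨by omega, by omega⟩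
      (by omega) (by omega))]
  exact dswap_one_mem_tGroup hn he ⟨by omega, by omega⟩

theorem beta_zero : beta n 0 = dflip n 1 2 := rfl

theorem beta_of_ne_zero (hi : i ≠ 0) : beta n i = dswap n i (i + 1) := by
  rw [beta, if_neg hi]
  rfl

theorem beta_mem_tGroup (hn : 6 ≤ n) (he : Even n) (hi : i < n) : beta n i ∈ tGroup n := by
  rcases Nat.eq_zero_or_pos i with rfl | hi₀
  · exact dflip_one_mem_tGroup hn he ⟨le_rfl, by omega⟩
  · rw [beta_of_ne_zero hi₀.ne']
    exact dswap_succ_mem_tGroup hn he ⟨hi₀, by omega⟩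

end TGroup

section DnSide

variable {n i y : ℕ}

theorem dswap_succ_mem_Dn (hi : i ∈ Set.Icc 1 (n - 1)) : dswap n i (i + 1) ∈ Dn n := by
  obtain ⟨hi₁, hi₂⟩ := hi
  rw [← beta_of_ne_zero (by omega)]
  exact Subgroup.subset_closure ⟨i, by omega, rfl⟩

theorem dflip_one_mem_Dn (hy : y ∈ Set.Icc 2 n) : dflip n 1 y ∈ Dn n := by
  refine forall_of_iff_succ (P := fun y => dflip n 1 y ∈ Dn n) (fun y hy hyn => ?_)
    (k := 2) ⟨le_rfl, hy.1.trans hy.2⟩ ?_ hy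
  · exact (dflip_mem_iff (dswap_succ_mem_Dn ⟨by omega, by omega⟩)
      (sendsFlip_dswap_of_ne ⟨by omega, by omega⟩ ⟨by omega, by omega⟩ ⟨le_rfl, by omega⟩
        (by omega) (by omega))
      (sendsFlip_dswap_left ⟨by omega, by omega⟩ ⟨by omega, by omega⟩)).symm
  · rw [← beta_zero]
    exact Subgroup.subset_closure ⟨0, by have := hy.1.trans hy.2; omega, rfl⟩

theorem dswapChain_mem_Dn {s m : ℕ} (hs : 1 ≤ s) (hsm : 2 * m + s ≤ n + 1) :
    dswapChain n s m ∈ Dn n := by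
  refine Subgroup.list_prod_mem _ fun x hx => ?_
  obtain ⟨k, hk, rfl⟩ := List.mem_map.1 hx
  exact dswap_succ_mem_Dn ⟨by omega, by have := List.mem_range.1 hk; omega⟩

theorem tGroup_le_Dn (hn : 3 ≤ n) : tGroup n ≤ Dn n := by
  rw [tGroup, Subgroup.closure_le]
  rintro _ (rfl | rfl | rfl)
  · rw [u1_eq_dswap_mul_dflip (by omega),
      ← dflip_mul_dflip (a := 1) ⟨le_rfl, by omega⟩ ⟨by omega, by omega⟩]
    exact mul_mem (dswap_succ_mem_Dn ⟨le_rfl, by omega⟩)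
      (mul_mem (dflip_one_mem_Dn ⟨by omega, by omega⟩) (dflip_one_mem_Dn ⟨by omega, le_rfl⟩))
  · rw [u2_eq_dswapChain]
    exact dswapChain_mem_Dn (by norm_num) (by omega)
  · rw [u3_eq_dswapChain]
    exact dswapChain_mem_Dn (by norm_num) (by omega)

theorem Dn_le_tGroup (hn : 6 ≤ n) (he : Even n) : Dn n ≤ tGroup n := by
  rw [Dn, Subgroup.closure_le]
  rintro _ ⟨i, hi, rfl⟩
  exact beta_mem_tGroup hn he hi

end DnSide

/-- For even `n ≥ 6`, `⟨t₁,t₂,t₃⟩` equals the standard copy `⟨β₀,…,β_{n-1}⟩` of the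
Coxeter group `Dₙ` in `Sym(2n)`. -/
theorem stmt13 (n : ℕ) (hn : 6 ≤ n) (he : Even n) :
    Subgroup.closure {u1 n, u2 n, u3 n} = Dn n :=
  (tGroup_le_Dn (by omega)).antisymm (Dn_le_tGroup hn he)
end
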